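/- arXiv:2312.15255 — 13 statements merged into one kernel-verified Lean document; each statement's English description precedes it below -/
import Mathlib

section
/- Let (U,p) be a partial metric space, α ∈ [0,1), and T : U → U satisfy condition (A): for all x ∈ U and q ∈ ℕ, p(T(x), T^{q+1}(x)) ≤ max{α·p(x,T^{q+1}(x)), α·p(x,T^q(x)), …, α·p(x,T(x)), p(x,x)}. Then for every x ∈ U and all q, q' ∈ ℕ₀, p(T^q(x), T^{q'}(x)) ≤ (2/(1−α))·p(x, T(x)). -/
open Filter Topology

/-- A partial metric on `U`. -/
structure IsPartialMetric {U : Type*} (p : U → U → ℝ) : Prop where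
  nonneg : ∀ x y, 0 ≤ p x y
  eq_iff : ∀ x y, x = y ↔ (p x x = p x y ∧ p y y = p x y)
  self_le : ∀ x y, p x x ≤ p x y
  symm : ∀ x y, p x y = p y x
  triangle : ∀ x y z, p x y ≤ p x z + p z y - p z z

/-- Condition (A): for every `x` and positive integer `q`,
`p (T x) (T^[q+1] x) ≤ max {α p(x,T^{q+1}x), …, α p(x,Tx), p(x,x)}`. -/
def CondA {U : Type*} (p : U → U → ℝ) (T : U → U) (α : ℝ) : Prop :=
  ∀ x : U, ∀ q : ℕ, 1 ≤ q →
    p (T x) (T^[q + 1] x) ≤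
      max ((Finset.Icc 1 (q + 1)).sup' (Finset.nonempty_Icc.mpr (by omega))
        (fun i => α * p x (T^[i] x))) (p x x)

/-- `ρ_p = inf {p(x,x) : x ∈ U}`. -/
noncomputable def rho {U : Type*} (p : U → U → ℝ) : ℝ := sInf (Set.range fun x => p x x)

/-- Condition (B) with a given `ε₁`. -/
def CondB {U : Type*} (p : U → U → ℝ) (T : U → U) (ε₁ : ℝ) : Prop :=
  ∀ x y : U, max (p x x) (p y y) ≤ rho p + ε₁ →
    ∀ ε : ℝ, 0 < ε → ∃ q : ℕ, 1 ≤ q ∧ p (T^[q] x) (T^[q] y) ≤ max (p x x) (p y y) + ε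

/-- `ρ_p`-completeness. -/
def RhoComplete {U : Type*} (p : U → U → ℝ) : Prop :=
  ∀ x : ℕ → U,
    Tendsto (fun qq : ℕ × ℕ => p (x qq.1) (x qq.2)) atTop (nhds (rho p)) →
    ∃ a : U, Tendsto (fun q => p (x q) a) atTop (nhds (p a a)) ∧ p a a = rho p

theorem lemma1a {U : Type*} (p : U → U → ℝ) (hp : IsPartialMetric p) (T : U → U)
    (α : ℝ) (hα0 : 0 ≤ α) (hα1 : α < 1) (hA : CondA p T α) :
    ∀ x : U, ∀ q q' : ℕ, p (T^[q] x) (T^[q'] x) ≤ 2 / (1 - α) * p x (T x) := by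
  intro x
  have h1α : 0 < 1 - α := by linarith
  set c1 := p x (T x) with hc1def
  have hc1 : 0 ≤ c1 := hp.nonneg _ _
  set K := 2 / (1 - α) * c1 with hKdef
  have hKeq : K * (1 - α) = 2 * c1 := by
    rw [hKdef]; field_simp
  have hKeq' : K = 2 * c1 + α * K := by nlinarith [hKeq]
  have hK0 : 0 ≤ K := mul_nonneg (div_nonneg (by norm_num) h1α.le) hc1
  have hαK : 0 ≤ α * K := mul_nonneg hα0 hK0
  have hc1K : c1 ≤ K := by linarith
  -- step 1: p x (T^[b] x) ≤ K for all b
  have hc : ∀ b : ℕ, p x (T^[b] x) ≤ K := by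
    intro b
    induction b using Nat.strong_induction_on with
    | _ b ih =>
      match b, ih with
      | 0, ih =>
        simpa using (hp.self_le x (T x)).trans hc1K
      | 1, ih =>
        simpa using hc1K
      | (m+2), ih =>
        set t := p x (T^[m+2] x) with htdef
        have hsup : ∀ i ∈ Finset.Icc 1 (m+2),
            α * p x (T^[i] x) ≤ max (α * K) (α * t) := by
          intro i hi
          rw [Finset.mem_Icc] at hi
          rcases eq_or_lt_of_le hi.2 with h | h
          · rw [h]; exact le_max_right _ _
          · exact le_max_of_le_left
              (mul_le_mul_of_nonneg_left (ih i (by omega)) hα0)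
        have hAx : p (T x) (T^[m+2] x) ≤ max (max (α * K) (α * t)) c1 :=
          (hA x (m+1) (by omega)).trans
            (max_le_max (Finset.sup'_le _ _ hsup) (hp.self_le x (T x)))
        have htri := hp.triangle x (T^[m+2] x) (T x)
        have hTT : 0 ≤ p (T x) (T x) := hp.nonneg _ _
        have hfin : t ≤ c1 + max (max (α * K) (α * t)) c1 := by
          rw [htdef]; linarith
        rcases le_total (α * t) (α * K) with h1 | h1
        · rw [max_eq_left h1] at hfin
          rcases le_total c1 (α * K) with h2 | h2
          · rw [max_eq_left h2] at hfin; linarith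
          · rw [max_eq_right h2] at hfin; linarith
        · rw [max_eq_right h1] at hfin
          rcases le_total c1 (α * t) with h2 | h2
          · rw [max_eq_left h2] at hfin
            nlinarith [hfin, hKeq, h1α, hc1]
          · rw [max_eq_right h2] at hfin; linarith
  -- step 2: p (T^[a] x) (T^[b] x) ≤ K for all a ≤ b
  have hD : ∀ a b : ℕ, a ≤ b → p (T^[a] x) (T^[b] x) ≤ K := by
    intro a
    induction a with
    | zero => intro b _; simpa using hc b
    | succ a ih =>
      intro b hb
      rcases eq_or_lt_of_le hb with h | h
      · rw [← h]
        calc p (T^[a+1] x) (T^[a+1] x) ≤ p (T^[a+1] x) (T^[a] x) := hp.self_le _ _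
          _ = p (T^[a] x) (T^[a+1] x) := hp.symm _ _
          _ ≤ K := ih (a+1) (by omega)
      · obtain ⟨m, hm⟩ : ∃ m, b = (m + 1 + 1) + a := ⟨b - a - 2, by omega⟩
        have e1 : T^[a+1] x = T (T^[a] x) := Function.iterate_succ_apply' T a x
        have e2 : T^[b] x = T^[m+1+1] (T^[a] x) := by
          rw [hm, Function.iterate_add_apply]
        rw [e1, e2]
        have hsup : ∀ i ∈ Finset.Icc 1 (m+1+1),
            α * p (T^[a] x) (T^[i] (T^[a] x)) ≤ α * K := by
          intro i hi
          apply mul_le_mul_of_nonneg_left _ hα0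
          have e3 : T^[i] (T^[a] x) = T^[i + a] x :=
            (Function.iterate_add_apply T i a x).symm
          rw [e3]
          exact ih (i + a) (by omega)
        have hself : p (T^[a] x) (T^[a] x) ≤ K := ih a (by omega)
        calc p (T (T^[a] x)) (T^[m+1+1] (T^[a] x))
            ≤ max ((Finset.Icc 1 (m+1+1)).sup' (Finset.nonempty_Icc.mpr (by omega))
                (fun i => α * p (T^[a] x) (T^[i] (T^[a] x)))) (p (T^[a] x) (T^[a] x)) :=
              hA (T^[a] x) (m+1) (by omega)
          _ ≤ max (α * K) K := max_le_max (Finset.sup'_le _ _ hsup) hself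
          _ = K := max_eq_right (by nlinarith)
  intro q q'
  rcases le_total q q' with h | h
  · exact hD q q' h
  · rw [hp.symm]
    exact hD q' q h
end

section
/- Let (U,p) be a partial metric space, α ∈ [0,1), and T : U → U satisfy condition (A): for all x ∈ U and q ∈ ℕ, p(T(x), T^{q+1}(x)) ≤ max{α·p(x,T^{q+1}(x)), α·p(x,T^q(x)), …, α·p(x,T(x)), p(x,x)}. Then for every x ∈ U and all k ∈ ℕ, p(T(x), T^{k+1}(x)) ≤ (1/(1−α))·p(x, T(x)). -/
open Filter Topology

theorem lemma1a_aux {U : Type*} (p : U → U → ℝ) (hp : IsPartialMetric p) (T : U → U)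
    (α : ℝ) (hα0 : 0 ≤ α) (hα1 : α < 1) (hA : CondA p T α) :
    ∀ x : U, ∀ k : ℕ, 1 ≤ k → p (T x) (T^[k + 1] x) ≤ 1 / (1 - α) * p x (T x) := by
  intro x k hk
  have h1α : 0 < 1 - α := by linarith
  have hpx : 0 ≤ p x (T x) := hp.nonneg _ _
  set M := 1 / (1 - α) * p x (T x) with hM
  have hMe : (1 - α) * M = p x (T x) := by
    rw [hM]; field_simp
  have hpM : p x (T x) ≤ M := by nlinarith
  suffices h : ∀ k : ℕ, p (T x) (T^[k + 1] x) ≤ M from h k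
  clear hk k
  intro k
  induction k using Nat.strong_induction_on with
  | _ k ih =>
    match k with
    | 0 =>
      have h0 : p (T x) (T^[0 + 1] x) = p (T x) (T x) := by simp
      rw [h0]
      calc p (T x) (T x) ≤ p (T x) x := hp.self_le _ _
        _ = p x (T x) := hp.symm _ _
        _ ≤ M := hpM
    | (k+1) =>
      have hA' := hA x (k + 1) (by omega)
      set D := p (T x) (T^[k + 1 + 1] x) with hD
      rcases le_max_iff.mp hA' with hs | hs
      · obtain ⟨i, hi, hieq⟩ := Finset.exists_mem_eq_sup'
          (Finset.nonempty_Icc.mpr (by omega : (1:ℕ) ≤ k + 1 + 1))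
          (fun i => α * p x (T^[i] x))
        rw [hieq] at hs
        simp only [Finset.mem_Icc] at hi
        rcases eq_or_lt_of_le hi.2 with hik | hik
        · -- i = k + 2
          have htri : p x (T^[i] x) ≤ p x (T x) + p (T x) (T^[i] x) - p (T x) (T x) :=
            hp.triangle x (T^[i] x) (T x)
          have hnn : 0 ≤ p (T x) (T x) := hp.nonneg _ _
          have hDi : p (T x) (T^[i] x) = D := by rw [hik]
          rw [hDi] at htri
          have hDnn : 0 ≤ D := hp.nonneg _ _
          -- hs : D ≤ α * p x (T^[i] x)
          nlinarith [mul_le_mul_of_nonneg_left htri hα0]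
        · -- i ≤ k + 1
          have hi1 : i - 1 < k + 1 := by omega
          have := ih (i - 1) hi1
          have hii : i - 1 + 1 = i := by omega
          rw [hii] at this
          have htri : p x (T^[i] x) ≤ p x (T x) + p (T x) (T^[i] x) - p (T x) (T x) :=
            hp.triangle x (T^[i] x) (T x)
          have hnn : 0 ≤ p (T x) (T x) := hp.nonneg _ _
          nlinarith [mul_le_mul_of_nonneg_left htri hα0]
      · calc D ≤ p x x := hs
          _ ≤ p x (T x) := hp.self_le _ _
          _ ≤ M := hpM
end

section
/- Let (U,p) be a partial metric space, α ∈ [0,1), and T : U → U satisfy condition (A): for all x ∈ U and q ∈ ℕ, p(T(x), T^{q+1}(x)) ≤ max{α·p(x,T^{q+1}(x)), …, α·p(x,T(x)), p(x,x)}. Then for every x ∈ U the limit r_x := lim_{q→∞} p(T^q(x), T^q(x)) exists. -/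
open Filter Topology

/- Write `xₙ = Tⁿ x` and `Δ_q = sup_{i,j ≥ q} p(xᵢ, xⱼ)`. Condition (A) bounds the orbit, and
applied at `x_n` it gives `Δ_{q+1} ≤ max (α Δ_q) B` whenever `p(xₙ, xₙ) ≤ B` for all `n ≥ q`, and
`p(x_{k+1}, x_{k+1}) ≤ max (α Δ_k) p(x_k, x_k)`. So the antitone `Δ` tends to some `L`, which bounds
`p(xₙ, xₙ)` from above; and if `p(xₙ, xₙ) ≤ b < L` with `α Δ_k < b` from `n` on, the second
inequality keeps the self-distances below `b` forever, and then the first forces `Δ_{n+1} ≤ b`. -/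

section TailDiam

variable {d : ℕ → ℕ → ℝ}

noncomputable def tailDiam (d : ℕ → ℕ → ℝ) (q : ℕ) : ℝ :=
  ⨆ ij : ℕ × ℕ, d (q + ij.1) (q + ij.2)

theorem bddAbove_range_tail (hd : BddAbove (Set.range (Function.uncurry d))) (q : ℕ) :
    BddAbove (Set.range fun ij : ℕ × ℕ => d (q + ij.1) (q + ij.2)) :=
  hd.mono <| by rintro _ ⟨ij, rfl⟩; exact ⟨(q + ij.1, q + ij.2), rfl⟩

theorem le_tailDiam (hd : BddAbove (Set.range (Function.uncurry d))) (q i j : ℕ) :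
    d (q + i) (q + j) ≤ tailDiam d q :=
  le_ciSup (f := fun ij : ℕ × ℕ => d (q + ij.1) (q + ij.2)) (bddAbove_range_tail hd q) (i, j)

theorem tailDiam_antitone (hd : BddAbove (Set.range (Function.uncurry d))) :
    Antitone (tailDiam d) := by
  refine antitone_nat_of_succ_le fun q => ciSup_le fun ij => ?_
  simpa only [add_assoc] using le_tailDiam hd q (1 + ij.1) (1 + ij.2)

theorem tailDiam_succ_le {α B : ℝ} {q : ℕ} (hd : BddAbove (Set.range (Function.uncurry d)))
    (hsymm : ∀ i j, d i j = d j i)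
    (hstep : ∀ n m D, (∀ k, d n (n + k) ≤ D) → d (n + 1) (n + 1 + m) ≤ max (α * D) (d n n))
    (hB : ∀ m, d (q + m) (q + m) ≤ B) :
    tailDiam d (q + 1) ≤ max (α * tailDiam d q) B := by
  have hle : ∀ i j, i ≤ j → d (q + 1 + i) (q + 1 + j) ≤ max (α * tailDiam d q) B := by
    intro i j hij
    obtain ⟨m, rfl⟩ := Nat.exists_eq_add_of_le hij
    have hD : ∀ k, d (q + i) (q + i + k) ≤ tailDiam d q := fun k => by
      simpa only [add_assoc] using le_tailDiam hd q i (i + k)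
    have := hstep (q + i) m _ hD
    rw [show q + 1 + i = q + i + 1 by omega, show q + 1 + (i + m) = q + i + 1 + m by omega]
    exact this.trans (max_le_max le_rfl (hB i))
  refine ciSup_le fun ⟨i, j⟩ => ?_
  rcases le_total i j with hij | hji
  · exact hle i j hij
  · rw [hsymm]; exact hle j i hji

end TailDiam

section Limit

variable {a Δ : ℕ → ℝ} {α : ℝ}

theorem lt_of_forall_mul_lt
    (hΔstep : ∀ q B, (∀ m, a (q + m) ≤ B) → Δ (q + 1) ≤ max (α * Δ q) B)
    (hastep : ∀ k, a (k + 1) ≤ max (α * Δ k) (a k))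
    {n : ℕ} {b : ℝ} (hαΔ : ∀ k ≥ n, α * Δ k < b) (hb : b < Δ (n + 1)) : b < a n := by
  by_contra! han
  have htail : ∀ m, a (n + m) ≤ b := by
    intro m
    induction m with
    | zero => exact han
    | succ m ih => exact (hastep (n + m)).trans (max_le (hαΔ _ (by omega)).le ih)
  exact hb.not_ge ((hΔstep n b htail).trans (max_le (hαΔ n le_rfl).le le_rfl))

theorem tendsto_of_le_max_mul (hα1 : α < 1) (ha : 0 ≤ a) (haΔ : a ≤ Δ) (hΔ : Antitone Δ)
    (hΔstep : ∀ q B, (∀ m, a (q + m) ≤ B) → Δ (q + 1) ≤ max (α * Δ q) B)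
    (hastep : ∀ k, a (k + 1) ≤ max (α * Δ k) (a k)) :
    Tendsto a atTop (𝓝 (⨅ q, Δ q)) := by
  have hΔbdd : BddBelow (Set.range Δ) := ⟨0, by rintro _ ⟨q, rfl⟩; exact (ha q).trans (haΔ q)⟩
  set L := ⨅ q, Δ q
  have hΔL : Tendsto Δ atTop (𝓝 L) := tendsto_atTop_ciInf hΔ hΔbdd
  have hLΔ : ∀ q, L ≤ Δ q := ciInf_le hΔbdd
  refine tendsto_order.2 ⟨fun l hl => ?_, fun u hu => ?_⟩
  · rcases (le_ciInf fun q => (ha q).trans (haΔ q) : 0 ≤ L).eq_or_lt with hL0 | hL0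
    · exact Eventually.of_forall fun n => hl.trans_le (hL0.ge.trans (ha n))
    obtain ⟨b, hlb, hbL⟩ := exists_between (max_lt hl (mul_lt_of_lt_one_left hL0 hα1))
    obtain ⟨n₀, hn₀⟩ := eventually_atTop.1 <|
      (tendsto_order.1 (hΔL.const_mul α)).2 b ((le_max_right _ _).trans_lt hlb)
    filter_upwards [eventually_ge_atTop n₀] with n hn
    exact (le_max_left _ _).trans_lt <| hlb.trans <| lt_of_forall_mul_lt hΔstep hastep
      (fun k hk => hn₀ k (hn.trans hk)) (hbL.trans_le (hLΔ _))
  · exact ((tendsto_order.1 hΔL).2 u hu).mono fun n hn => (haΔ n).trans_lt hn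

theorem tendsto_diag_of_le_max (hα1 : α < 1) {d : ℕ → ℕ → ℝ} (hd0 : ∀ i j, 0 ≤ d i j)
    (hd : BddAbove (Set.range (Function.uncurry d))) (hsymm : ∀ i j, d i j = d j i)
    (hstep : ∀ n m D, (∀ k, d n (n + k) ≤ D) → d (n + 1) (n + 1 + m) ≤ max (α * D) (d n n)) :
    Tendsto (fun n => d n n) atTop (𝓝 (⨅ q, tailDiam d q)) := by
  refine tendsto_of_le_max_mul hα1 (fun n => hd0 n n)
    (fun n => by simpa using le_tailDiam hd n 0 0) (tailDiam_antitone hd)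
    (fun q B hB => tailDiam_succ_le hd hsymm hstep hB) fun k => ?_
  simpa using hstep k 0 (tailDiam d k) fun j => le_tailDiam hd k 0 j

end Limit

section CondA

variable {U : Type*} {p : U → U → ℝ} {T : U → U} {α : ℝ}

theorem CondA.le_max (hA : CondA p T α) (hα0 : 0 ≤ α) {x : U} {q : ℕ} (hq : 1 ≤ q) {D : ℝ}
    (hD : ∀ k, 1 ≤ k → k ≤ q + 1 → p x (T^[k] x) ≤ D) :
    p (T x) (T^[q + 1] x) ≤ max (α * D) (p x x) :=
  (hA x q hq).trans <| max_le_max_right _ <| Finset.sup'_le _ _ fun k hk =>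
    mul_le_mul_of_nonneg_left (hD k (Finset.mem_Icc.1 hk).1 (Finset.mem_Icc.1 hk).2) hα0

theorem CondA.iterate_le_div (hp : IsPartialMetric p) (hA : CondA p T α) (hα0 : 0 ≤ α)
    (hα1 : α < 1) (x : U) (m : ℕ) :
    p x (T^[m] x) ≤ (p x (T x) + p x x) / (1 - α) := by
  set C := (p x (T x) + p x x) / (1 - α)
  have hC : p x (T x) + p x x = (1 - α) * C := by
    rw [mul_div_cancel₀ _ (sub_ne_zero.2 hα1.ne')]
  induction m using Nat.strong_induction_on with
  | _ m ih =>
  have hαc : 0 ≤ α * max C (p x (T^[m] x)) :=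
    mul_nonneg hα0 ((hp.nonneg _ _).trans (le_max_right _ _))
  have key : p x (T^[m] x) ≤ (1 - α) * C + α * max C (p x (T^[m] x)) := by
    match m with
    | 0 =>
      simp only [Function.iterate_zero, id] at hαc ⊢
      linarith [hp.nonneg x (T x)]
    | 1 =>
      simp only [Function.iterate_one] at hαc ⊢
      linarith [hp.nonneg x x]
    | q + 2 =>
      have hstep := hA.le_max hα0 (q := q + 1) (by omega) (D := max C (p x (T^[q + 2] x)))
        fun k _ hk => by
          rcases hk.lt_or_eq with hk | rfl
          · exact (ih k hk).trans (le_max_left _ _)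
          · exact le_max_right _ _
      calc p x (T^[q + 2] x) ≤ p x (T x) + p (T x) (T^[q + 2] x) - p (T x) (T x) :=
            hp.triangle _ _ _
        _ ≤ p x (T x) + (α * max C (p x (T^[q + 2] x)) + p x x) := by
            linarith [hp.nonneg (T x) (T x), max_le_add_of_nonneg hαc (hp.nonneg x x)]
        _ = _ := by rw [← hC]; ring
  by_contra! h
  rw [max_eq_right h.le] at key
  nlinarith

theorem CondA.bddAbove_orbit (hp : IsPartialMetric p) (hA : CondA p T α) (hα0 : 0 ≤ α)
    (hα1 : α < 1) (x : U) :
    BddAbove (Set.range (Function.uncurry fun i j => p (T^[i] x) (T^[j] x))) := by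
  refine ⟨2 * ((p x (T x) + p x x) / (1 - α)), ?_⟩
  rintro _ ⟨⟨i, j⟩, rfl⟩
  show p (T^[i] x) (T^[j] x) ≤ _
  have hi := hA.iterate_le_div hp hα0 hα1 x i
  have hj := hA.iterate_le_div hp hα0 hα1 x j
  linarith [hp.triangle (T^[i] x) (T^[j] x) x, hp.symm x (T^[i] x), hp.nonneg x x]

theorem CondA.orbit_le_max (hp : IsPartialMetric p) (hA : CondA p T α) (hα0 : 0 ≤ α) (x : U)
    (n m : ℕ) {D : ℝ} (hD : ∀ k, p (T^[n] x) (T^[n + k] x) ≤ D) :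
    p (T^[n + 1] x) (T^[n + 1 + m] x) ≤ max (α * D) (p (T^[n] x) (T^[n] x)) := by
  set y := T^[n] x
  have hy : ∀ k, T^[n + k] x = T^[k] y := fun k => by rw [add_comm, Function.iterate_add_apply]
  have hDy : ∀ k, p y (T^[k] y) ≤ D := fun k => hy k ▸ hD k
  rw [Function.iterate_succ_apply', show n + 1 + m = n + (m + 1) by omega, hy]
  cases m with
  | zero => exact (hp.self_le _ _).trans (hA.le_max hα0 le_rfl fun k _ _ => hDy k)
  | succ m => exact hA.le_max hα0 (by omega) fun k _ _ => hDy k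

end CondA

theorem lemma2a_limit_exists {U : Type*} (p : U → U → ℝ) (hp : IsPartialMetric p)
    (T : U → U) (α : ℝ) (hα0 : 0 ≤ α) (hα1 : α < 1) (hA : CondA p T α) :
    ∀ x : U, ∃ r : ℝ, Tendsto (fun q : ℕ => p (T^[q] x) (T^[q] x)) atTop (nhds r) := by
  intro x
  exact ⟨_, tendsto_diag_of_le_max hα1 (d := fun i j => p (T^[i] x) (T^[j] x))
    (fun _ _ => hp.nonneg _ _) (hA.bddAbove_orbit hp hα0 hα1 x) (fun _ _ => hp.symm _ _)
    fun n m _ hD => hA.orbit_le_max hp hα0 x n m hD⟩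
end

section
/- Let (U,p) be a partial metric space, α ∈ [0,1), and T : U → U satisfy condition (A): for all x ∈ U, q ∈ ℕ, p(T(x), T^{q+1}(x)) ≤ max{α·p(x,T^{q+1}(x)), …, α·p(x,T(x)), p(x,x)}. Then for every x ∈ U the sequence (T^q(x)) is r_x-Cauchy, i.e. lim_{q,q'→∞} p(T^q(x), T^{q'}(x)) = r_x, where r_x = lim_{q→∞} p(T^q(x), T^q(x)). -/
open Filter Topology

lemma aux_bound {U : Type*} (p : U → U → ℝ) (hp : IsPartialMetric p)
    (T : U → U) (α : ℝ) (hα0 : 0 ≤ α) (hα1 : α < 1) (hA : CondA p T α) :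
    ∀ k (y : U), p y (T^[k] y) ≤ (p y (T y) + p y y) / (1 - α) := by
  have h1α : (0:ℝ) < 1 - α := by linarith
  intro k
  induction k using Nat.strong_induction_on with
  | _ k ih =>
    intro y
    have hCmul : (p y (T y) + p y y) / (1 - α) * (1 - α) = p y (T y) + p y y :=
      div_mul_cancel₀ _ h1α.ne'
    have h0y : 0 ≤ p y y := hp.nonneg y y
    have h0Ty : 0 ≤ p y (T y) := hp.nonneg y (T y)
    match k with
    | 0 =>
      simp only [Function.iterate_zero_apply]
      rw [le_div_iff₀ h1α]; nlinarith
    | 1 =>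
      simp only [Function.iterate_one]
      rw [le_div_iff₀ h1α]; nlinarith
    | (q + 2) =>
      have htri : p y (T^[q+2] y) ≤ p y (T y) + p (T y) (T^[q+2] y) := by
        have h1 := hp.triangle y (T^[q+2] y) (T y)
        have h2 := hp.nonneg (T y) (T y)
        linarith
      have hAy := hA y (q + 1) (by omega)
      obtain ⟨i, hi, hieq⟩ := Finset.exists_mem_eq_sup' (Finset.nonempty_Icc.mpr
        (show 1 ≤ q + 1 + 1 by omega)) (fun i => α * p y (T^[i] y))
      rw [hieq] at hAy
      rw [Finset.mem_Icc] at hi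
      rcases le_max_iff.mp hAy with hc | hc
      · -- p (T y) (T^[q+2] y) ≤ α * p y (T^[i] y)
        rcases eq_or_lt_of_le hi.2 with hik | hik
        · -- i = q + 2, self-referential case
          rw [hik] at hc
          have : p y (T^[q+2] y) ≤ p y (T y) + α * p y (T^[q+2] y) := by linarith
          rw [le_div_iff₀ h1α]; nlinarith
        · -- i < q + 2, use induction hypothesis
          have hIH := ih i (by omega) y
          have : α * p y (T^[i] y) ≤ α * ((p y (T y) + p y y) / (1 - α)) :=
            mul_le_mul_of_nonneg_left hIH hα0
          rw [le_div_iff₀ h1α]; nlinarith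
      · -- p (T y) (T^[q+2] y) ≤ p y y
        rw [le_div_iff₀ h1α]; nlinarith

theorem lemma2a_cauchy {U : Type*} (p : U → U → ℝ) (hp : IsPartialMetric p)
    (T : U → U) (α : ℝ) (hα0 : 0 ≤ α) (hα1 : α < 1) (hA : CondA p T α)
    (x : U) (r : ℝ)
    (hr : Tendsto (fun q : ℕ => p (T^[q] x) (T^[q] x)) atTop (nhds r)) :
    Tendsto (fun qq : ℕ × ℕ => p (T^[qq.1] x) (T^[qq.2] x)) atTop (nhds r) := by
  have h1α : (0:ℝ) < 1 - α := by linarith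
  set f : ℕ → U := fun m => T^[m] x with hf
  have hfadd : ∀ m k, f (m + k) = T^[k] (f m) := by
    intro m k
    simp [hf, add_comm m k, Function.iterate_add_apply]
  set a : ℕ → ℝ := fun m => p (f m) (f m) with ha
  set S : ℕ → ℝ := fun m => sSup (Set.range fun k => p (f m) (f (m + k))) with hS
  have hbdd : ∀ m, BddAbove (Set.range fun k => p (f m) (f (m + k))) := by
    intro m
    refine ⟨(p (f m) (T (f m)) + p (f m) (f m)) / (1 - α), ?_⟩
    rintro _ ⟨k, rfl⟩
    show p (f m) (f (m + k)) ≤ _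
    rw [hfadd]
    exact aux_bound p hp T α hα0 hα1 hA k (f m)
  have hle_S : ∀ m k, p (f m) (f (m + k)) ≤ S m := fun m k =>
    le_csSup (hbdd m) ⟨k, rfl⟩
  have haS : ∀ m, a m ≤ S m := by
    intro m; have := hle_S m 0; simpa using this
  have hS0 : ∀ m, 0 ≤ S m := fun m => le_trans (hp.nonneg _ _) (haS m)
  have hr0 : 0 ≤ r := ge_of_tendsto' hr fun m => hp.nonneg _ _
  have hrec : ∀ m, S (m + 1) ≤ max (α * S m) (a m) := by
    intro m
    apply csSup_le (Set.range_nonempty _)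
    rintro _ ⟨k, rfl⟩
    have key : ∀ k', 1 ≤ k' → p (f (m + 1)) (f (m + 1 + k')) ≤ max (α * S m) (a m) := by
      intro k' hk'
      have h1 : f (m + 1) = T (f m) := by
        simp [hf, Function.iterate_succ_apply']
      have h2 : f (m + 1 + k') = T^[k' + 1] (f m) := by
        rw [show m + 1 + k' = m + (k' + 1) by ring, hfadd]
      rw [h1, h2]
      refine le_trans (hA (f m) k' hk') (max_le_max ?_ le_rfl)
      apply Finset.sup'_le
      intro i hi
      refine mul_le_mul_of_nonneg_left ?_ hα0
      rw [← hfadd m i]; exact hle_S m i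
    cases Nat.eq_zero_or_pos k with
    | inl h =>
      subst h
      have hsl : p (f (m+1)) (f (m+1+0)) ≤ p (f (m+1)) (f (m+1+1)) := by
        simpa using hp.self_le (f (m+1)) (f (m+1+1))
      exact hsl.trans (key 1 le_rfl)
    | inr h => exact key k h
  have hSsmall : ∀ ε : ℝ, 0 < ε → ∃ M, ∀ m ≥ M, S m ≤ r + ε := by
    intro ε hε
    obtain ⟨N, hN⟩ := Metric.tendsto_atTop.mp hr ε hε
    have hNa : ∀ i, N ≤ i → a i ≤ r + ε := by
      intro i hi
      have := hN i hi
      rw [Real.dist_eq, abs_sub_lt_iff] at this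
      have := this.1
      simp only [ha, hf]
      linarith
    have hiter : ∀ j, S (N + j) ≤ max (α ^ j * S N) (r + ε) := by
      intro j
      induction j with
      | zero => simpa using le_max_left (S N) (r + ε)
      | succ j ihj =>
        have h1 : S (N + j + 1) ≤ max (α * S (N + j)) (a (N + j)) := hrec (N + j)
        have h2 : a (N + j) ≤ r + ε := hNa _ (Nat.le_add_right N j)
        have h3 : α * S (N + j) ≤ max (α ^ (j+1) * S N) (r + ε) := by
          calc α * S (N + j) ≤ α * max (α ^ j * S N) (r + ε) :=
                mul_le_mul_of_nonneg_left ihj hα0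
            _ = max (α * (α ^ j * S N)) (α * (r + ε)) := mul_max_of_nonneg _ _ hα0
            _ ≤ max (α ^ (j+1) * S N) (r + ε) := by
                apply max_le_max
                · apply le_of_eq; rw [pow_succ]; ring
                · nlinarith
        have hEq : N + (j+1) = N + j + 1 := rfl
        rw [hEq]
        exact h1.trans (max_le h3 (le_trans h2 (le_max_right _ _)))
    have hpow : Tendsto (fun j : ℕ => α ^ j * S N) atTop (nhds 0) := by
      simpa using (tendsto_pow_atTop_nhds_zero_of_lt_one hα0 hα1).mul_const (S N)
    obtain ⟨J, hJ⟩ := Filter.eventually_atTop.mp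
      (hpow.eventually_lt_const (show (0:ℝ) < r + ε by linarith))
    refine ⟨N + J, fun m hm => ?_⟩
    obtain ⟨j, rfl⟩ := Nat.exists_eq_add_of_le (show N ≤ m by omega)
    have hj : J ≤ j := by omega
    exact (hiter j).trans (max_le (le_of_lt (hJ j hj)) le_rfl)
  rw [Metric.tendsto_atTop]
  intro ε hε
  obtain ⟨N1, hN1⟩ := Metric.tendsto_atTop.mp hr (ε/2) (by linarith)
  obtain ⟨M, hM⟩ := hSsmall (ε/2) (by linarith)
  refine ⟨(max N1 M, max N1 M), fun qq hqq => ?_⟩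
  obtain ⟨q, q'⟩ := qq
  obtain ⟨hq, hq'⟩ := Prod.mk_le_mk.mp hqq
  set m := min q q' with hm
  have hmN1 : N1 ≤ m := le_min (le_trans (le_max_left _ _) hq) (le_trans (le_max_left _ _) hq')
  have hmM : M ≤ m := le_min (le_trans (le_max_right _ _) hq) (le_trans (le_max_right _ _) hq')
  have hlow : a m ≤ p (f q) (f q') := by
    rcases le_total q q' with h | h
    · rw [hm, min_eq_left h]; exact hp.self_le (f q) (f q')
    · rw [hm, min_eq_right h, hp.symm (f q) (f q')]
      exact hp.self_le (f q') (f q)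
  have hupp : p (f q) (f q') ≤ S m := by
    rcases le_total q q' with h | h
    · rw [hm, min_eq_left h]
      have := hle_S q (q' - q)
      rwa [show q + (q' - q) = q' by omega] at this
    · rw [hm, min_eq_right h, hp.symm (f q) (f q')]
      have := hle_S q' (q - q')
      rwa [show q' + (q - q') = q by omega] at this
  have h1 := hN1 m hmN1
  rw [Real.dist_eq, abs_sub_lt_iff] at h1
  have h2 := hM m hmM
  rw [Real.dist_eq, abs_sub_lt_iff]
  simp only [ha, hf] at h1 hlow hupp h2 ⊢
  constructor <;> linarith [h1.2]
end

section
/- Let (U,p) be a partial metric space, α ∈ [0,1), and T : U → U satisfy condition (A). Let ρ_p := inf{p(x,x) : x ∈ U} and U_p := {x : p(x,x) = ρ_p}. If x ∈ U_p and lim_{q→∞} p(T^q(x), T^q(x)) = lim_{q→∞} p(T^q(x), x) = p(x,x), then T(x) = x. -/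
open Filter Topology

theorem lemma2_fixed {U : Type*} (p : U → U → ℝ) (hp : IsPartialMetric p)
    (T : U → U) (α : ℝ) (hα0 : 0 ≤ α) (hα1 : α < 1) (hA : CondA p T α)
    (x : U) (hx : p x x = rho p)
    (h1 : Tendsto (fun q : ℕ => p (T^[q] x) (T^[q] x)) atTop (nhds (p x x)))
    (h2 : Tendsto (fun q : ℕ => p (T^[q] x) x) atTop (nhds (p x x))) :
    T x = x := by
  have hbdd : ∀ y : U, rho p ≤ p y y := fun y =>
    csInf_le ⟨0, by rintro r ⟨z, rfl⟩; exact hp.nonneg z z⟩ ⟨y, rfl⟩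
  have hρ0 : 0 ≤ rho p :=
    le_csInf ⟨p x x, x, rfl⟩ (by rintro r ⟨z, rfl⟩; exact hp.nonneg z z)
  set b : ℕ → ℝ := fun k => p (T^[k] x) x with hb
  have hbρ : ∀ k, rho p ≤ b k := by
    intro k
    have h := hp.self_le x (T^[k] x)
    rw [hp.symm x (T^[k] x)] at h
    simpa [hb, hx] using h
  have hβ_bdd : BddAbove (Set.range fun k : ℕ => b (k + 1)) :=
    (h2.comp (tendsto_add_atTop_nat 1)).bddAbove_range
  set β : ℝ := sSup (Set.range fun k : ℕ => b (k + 1)) with hβ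
  have hβ_le : ∀ i, 1 ≤ i → b i ≤ β := by
    intro i hi
    exact le_csSup hβ_bdd ⟨i - 1, by simp [Nat.sub_add_cancel hi]⟩
  set G : ℝ := max (α * β) (rho p) with hG
  have hG0 : 0 ≤ G := le_trans hρ0 (le_max_right _ _)
  have hαG : α * G ≤ G := mul_le_of_le_one_left hG0 hα1.le
  have hlim : Tendsto (fun n => G + (p (T^[n] x) x - p (T^[n] x) (T^[n] x)))
      atTop (nhds G) := by
    have h3 := (tendsto_const_nhds : Tendsto (fun _ : ℕ => G) atTop (nhds G)).add (h2.sub h1)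
    simpa using h3
  have hdiag : ∀ k, (∀ j, k < j → p (T^[k] x) (T^[j] x) ≤ G) → p (T^[k] x) x ≤ G := by
    intro k hk
    apply ge_of_tendsto hlim
    filter_upwards [eventually_ge_atTop (k + 1)] with n hn
    have tri := hp.triangle (T^[k] x) x (T^[n] x)
    have h4 := hk n (by omega)
    linarith
  have key : ∀ k : ℕ, ∀ j, k + 1 < j → p (T^[k + 1] x) (T^[j] x) ≤ G := by
    intro k
    induction k with
    | zero =>
      intro j hj
      have h := hA x (j - 1) (by omega)
      have e0 : T^[j - 1 + 1] x = T^[j] x := by congr 1; omega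
      rw [e0] at h
      simp only [zero_add, Function.iterate_one]
      refine le_trans h (max_le ?_ ?_)
      · apply Finset.sup'_le
        intro i hi
        have hi1 : 1 ≤ i := (Finset.mem_Icc.mp hi).1
        have h5 : p x (T^[i] x) ≤ β := by
          rw [hp.symm]; exact hβ_le i hi1
        calc α * p x (T^[i] x) ≤ α * β := mul_le_mul_of_nonneg_left h5 hα0
          _ ≤ G := le_max_left _ _
      · rw [hx]; exact le_max_right _ _
    | succ m ih =>
      intro j hj
      have hbm : p (T^[m + 1] x) x ≤ G := hdiag (m + 1) ih
      set y := T^[m + 1] x with hy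
      have h := hA y (j - (m + 2)) (by omega)
      have e1 : T y = T^[m + 1 + 1] x := (Function.iterate_succ_apply' T (m + 1) x).symm
      have e2 : T^[j - (m + 2) + 1] y = T^[j] x := by
        rw [hy, ← Function.iterate_add_apply]; congr 1; omega
      rw [e1, e2] at h
      refine le_trans h (max_le ?_ ?_)
      · apply Finset.sup'_le
        intro i hi
        have hi1 : 1 ≤ i := (Finset.mem_Icc.mp hi).1
        have e3 : T^[i] y = T^[i + (m + 1)] x := by
          rw [hy, ← Function.iterate_add_apply]
        rw [e3]
        have h3 := ih (i + (m + 1)) (by omega)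
        calc α * p y (T^[i + (m + 1)] x) ≤ α * G := mul_le_mul_of_nonneg_left h3 hα0
          _ ≤ G := hαG
      · calc p y y ≤ p y x := hp.self_le y x
          _ ≤ G := hbm
  have hball : ∀ k, 1 ≤ k → b k ≤ G := by
    intro k hk
    obtain ⟨m, rfl⟩ : ∃ m, k = m + 1 := ⟨k - 1, by omega⟩
    exact hdiag (m + 1) (key m)
  have hβG : β ≤ G :=
    csSup_le ⟨b 1, 0, rfl⟩ (by rintro r ⟨k, rfl⟩; exact hball (k + 1) (by omega))
  have hd1 : b 1 ≤ β := hβ_le 1 le_rfl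
  have hd2 : rho p ≤ b 1 := hbρ 1
  have hmain : b 1 = rho p := by
    rcases le_max_iff.mp hβG with h | h
    · nlinarith
    · linarith
  have hTx : p (T x) x = rho p := by
    have : b 1 = p (T x) x := by simp [hb]
    linarith
  have hTxTx : p (T x) (T x) = p (T x) x := by
    have h6 : p (T x) (T x) ≤ p (T x) x := hp.self_le (T x) x
    have h7 := hbdd (T x)
    linarith [hTx]
  exact (hp.eq_iff (T x) x).mpr ⟨hTxTx, by rw [hx, hTx]⟩
end

section
/- Let (U,p) be a partial metric space with ρ_p := inf{p(x,x) : x ∈ U}. Suppose T : U → U satisfies condition (A) for some α ∈ [0,1) and condition (B) for some ε₁ > 0. Then for any x ∈ U with p(x,x) < ρ_p + ε₁, the limit r_x := lim_{q→∞} p(T^q(x), T^q(x)) exists and r_x ≤ p(x,x). -/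
open Filter Topology

/-- Orbit bound: all orbit distances from `y` are controlled by `p y (T y)`. -/
lemma orbit_bd {U : Type*} (p : U → U → ℝ) (hp : IsPartialMetric p)
    (T : U → U) (α : ℝ) (hα0 : 0 ≤ α) (hα1 : α < 1) (hA : CondA p T α)
    (y : U) : ∀ n : ℕ, 1 ≤ n → p y (T^[n] y) ≤ 2 / (1 - α) * p y (T y) := by
  have h1α : 0 < 1 - α := by linarith
  have hd1 : 0 ≤ p y (T y) := hp.nonneg _ _
  have hK1 : (1 : ℝ) ≤ 2 / (1 - α) := by rw [le_div_iff₀ h1α]; linarith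
  have hK2 : (2 : ℝ) ≤ 2 / (1 - α) := by rw [le_div_iff₀ h1α]; nlinarith
  have hKmul : 2 / (1 - α) * (1 - α) = 2 := div_mul_cancel₀ _ (ne_of_gt h1α)
  intro n
  induction n using Nat.strong_induction_on with
  | _ n IH =>
    intro hn
    rcases Nat.lt_or_ge n 2 with hlt | hge
    · have : n = 1 := by omega
      subst this
      simpa using (by nlinarith : p y (T y) ≤ 2 / (1 - α) * p y (T y))
    · obtain ⟨k, rfl⟩ : ∃ k, n = k + 1 + 1 := ⟨n - 2, by omega⟩
      have hAy := hA y (k + 1) (by omega)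
      set D := p y (T^[k + 1 + 1] y) with hD
      have htri := hp.triangle y (T^[k + 1 + 1] y) (T y)
      have hTT : 0 ≤ p (T y) (T y) := hp.nonneg _ _
      have hd0 : p y y ≤ p y (T y) := hp.self_le _ _
      -- bound the sup'
      have hsup_le : ((Finset.Icc 1 (k + 1 + 1)).sup'
          (Finset.nonempty_Icc.mpr (by omega)) (fun i => α * p y (T^[i] y))) ≤
          max (α * D) (α * (2 / (1 - α) * p y (T y))) := by
        apply Finset.sup'_le
        intro i hi
        obtain ⟨hi1, hi2⟩ := Finset.mem_Icc.mp hi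
        rcases eq_or_lt_of_le hi2 with rfl | hilt
        · exact le_max_left _ _
        · exact le_trans (mul_le_mul_of_nonneg_left (IH i hilt hi1) hα0) (le_max_right _ _)
      have h2 : p (T y) (T^[k + 1 + 1] y) ≤
          max (max (α * D) (α * (2 / (1 - α) * p y (T y)))) (p y (T y)) :=
        le_trans hAy (max_le_max hsup_le hd0)
      have h3 : D ≤ p y (T y) + max (max (α * D) (α * (2 / (1 - α) * p y (T y)))) (p y (T y)) :=
        by rw [hD]; linarith
      rcases max_cases (max (α * D) (α * (2 / (1 - α) * p y (T y)))) (p y (T y)) with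
        ⟨hM, _⟩ | ⟨hM, _⟩
      · rw [hM] at h3
        rcases max_cases (α * D) (α * (2 / (1 - α) * p y (T y))) with ⟨hM2, _⟩ | ⟨hM2, _⟩
        · rw [hM2] at h3; nlinarith
        · rw [hM2] at h3; nlinarith
      · rw [hM] at h3; nlinarith

/-- Decay lemma: iterated application of condition (A). -/
lemma decay_bd {U : Type*} (p : U → U → ℝ) (hp : IsPartialMetric p)
    (T : U → U) (α : ℝ) (hα0 : 0 ≤ α) (hα1 : α < 1) (hA : CondA p T α)
    (x : U) (N : ℕ) (C G : ℝ) (hG0 : 0 ≤ G)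
    (hsG : ∀ c, N ≤ c → p (T^[c] x) (T^[c] x) ≤ G)
    (hC : ∀ b, N < b → p (T^[N] x) (T^[b] x) ≤ C) :
    ∀ a, N ≤ a → ∀ b, a < b → p (T^[a] x) (T^[b] x) ≤ max (α ^ (a - N) * C) G := by
  intro a ha
  induction a, ha using Nat.le_induction with
  | base =>
    intro b hb
    refine le_trans (hC b hb) ?_
    simp
  | succ a ha IH =>
    intro b hb
    obtain ⟨w, rfl⟩ : ∃ w, b = w + 1 + 1 + a := ⟨b - a - 2, by omega⟩
    have hAz := hA (T^[a] x) (w + 1) (by omega)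
    simp only [← Function.iterate_succ_apply', ← Function.iterate_add_apply] at hAz
    refine le_trans hAz (max_le ?_ ?_)
    · have hsup : ((Finset.Icc 1 (w + 1 + 1)).sup'
          (Finset.nonempty_Icc.mpr (by omega)) (fun i => α * p (T^[a] x) (T^[i + a] x))) ≤
          α * max (α ^ (a - N) * C) G := by
        apply Finset.sup'_le
        intro i hi
        obtain ⟨hi1, _⟩ := Finset.mem_Icc.mp hi
        exact mul_le_mul_of_nonneg_left (IH (i + a) (by omega)) hα0
      refine le_trans hsup ?_
      rw [mul_max_of_nonneg _ _ hα0]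
      apply max_le_max
      · have he : α * (α ^ (a - N) * C) = α ^ (a + 1 - N) * C := by
          rw [show a + 1 - N = (a - N) + 1 from by omega, pow_succ]; ring
        exact le_of_eq he
      · nlinarith
    · exact le_trans (hsG a ha) (le_max_right _ _)

/-- Chain lemma from condition (B): arbitrarily late indices with small self-distance. -/
lemma chain_bd {U : Type*} (p : U → U → ℝ) (T : U → U) (ε₁ : ℝ) (hB : CondB p T ε₁)
    (x : U) (ε : ℝ) (hε : 0 < ε) (hsmall : p x x + ε ≤ rho p + ε₁) :
    ∀ k : ℕ, ∃ q, k ≤ q ∧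
      p (T^[q] x) (T^[q] x) ≤ p x x + ε * (1 - (1 / 2) ^ k) := by
  intro k
  induction k with
  | zero => exact ⟨0, le_refl 0, by simp⟩
  | succ k IH =>
    obtain ⟨q, hqk, hq⟩ := IH
    have hpow : (0 : ℝ) ≤ (1 / 2 : ℝ) ^ k := by positivity
    have hcond : max (p (T^[q] x) (T^[q] x)) (p (T^[q] x) (T^[q] x)) ≤ rho p + ε₁ := by
      rw [max_self]; nlinarith
    obtain ⟨m, hm1, hm⟩ := hB (T^[q] x) (T^[q] x) hcond (ε * (1 / 2) ^ (k + 1)) (by positivity)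
    rw [max_self, ← Function.iterate_add_apply T m q x] at hm
    refine ⟨m + q, by omega, ?_⟩
    have hps : ((1 : ℝ) / 2) ^ (k + 1) = (1 / 2) ^ k * (1 / 2) := pow_succ _ _
    nlinarith

theorem lemma1 {U : Type*} (p : U → U → ℝ) (hp : IsPartialMetric p)
    (T : U → U) (α : ℝ) (hα0 : 0 ≤ α) (hα1 : α < 1) (hA : CondA p T α)
    (ε₁ : ℝ) (hε₁ : 0 < ε₁) (hB : CondB p T ε₁)
    (x : U) (hx : p x x < rho p + ε₁) :
    ∃ r : ℝ, Tendsto (fun q : ℕ => p (T^[q] x) (T^[q] x)) atTop (nhds r) ∧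
      r ≤ p x x := by
  have h1α : 0 < 1 - α := by linarith
  set s : ℕ → ℝ := fun q : ℕ => p (T^[q] x) (T^[q] x) with hs
  have horb := orbit_bd p hp T α hα0 hα1 hA
  -- upper bound for s
  have hub : ∀ n, s n ≤ max (p x x) (2 / (1 - α) * p x (T x)) := by
    intro n
    rcases Nat.eq_zero_or_pos n with rfl | hn
    · simp [hs]
    · have h1 : p (T^[n] x) (T^[n] x) ≤ p (T^[n] x) x := hp.self_le _ _
      have h2 : p (T^[n] x) x = p x (T^[n] x) := hp.symm _ _
      have h3 := horb x n hn
      have : s n ≤ 2 / (1 - α) * p x (T x) := by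
        rw [hs]; simp only; linarith
      exact le_trans this (le_max_right _ _)
  have hBddAbove : IsBoundedUnder (· ≤ ·) atTop s := isBoundedUnder_of ⟨_, hub⟩
  have hBddBelow : IsBoundedUnder (· ≥ ·) atTop s :=
    isBoundedUnder_of ⟨0, fun n => hp.nonneg _ _⟩
  have hcob_le : IsCoboundedUnder (· ≤ ·) atTop s := hBddBelow.isCoboundedUnder_le
  have hcob_ge : IsCoboundedUnder (· ≥ ·) atTop s := hBddAbove.isCoboundedUnder_ge
  set lam := liminf s atTop with hlam
  set beta := limsup s atTop with hbeta
  have hlam0 : 0 ≤ lam :=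
    le_liminf_of_le hcob_ge (Eventually.of_forall fun n => hp.nonneg _ _)
  have hlb : lam ≤ beta := liminf_le_limsup hBddAbove hBddBelow
  have hbeta0 : 0 ≤ beta := le_trans hlam0 hlb
  -- liminf ≤ p x x
  have hlam_le : lam ≤ p x x := by
    by_contra hcon
    push_neg at hcon
    set ε := min ((lam - p x x) / 2) (rho p + ε₁ - p x x) with hεd
    have hε : 0 < ε := lt_min (by linarith) (by linarith)
    have hsm : p x x + ε ≤ rho p + ε₁ := by
      have := min_le_right ((lam - p x x) / 2) (rho p + ε₁ - p x x); linarith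
    have hfreq : ∃ᶠ q in atTop, s q ≤ p x x + ε := by
      rw [frequently_atTop]
      intro k
      obtain ⟨q, hq1, hq2⟩ := chain_bd p T ε₁ hB x ε hε hsm k
      have hpow : (0 : ℝ) ≤ (1 / 2 : ℝ) ^ k := by positivity
      exact ⟨q, hq1, by rw [hs]; simp only; nlinarith⟩
    have h4 : lam ≤ p x x + ε := liminf_le_of_frequently_le hfreq hBddBelow
    have h5 := min_le_left ((lam - p x x) / 2) (rho p + ε₁ - p x x)
    linarith
  -- key inequality
  have hkey : ∀ ε : ℝ, 0 < ε → ε ≤ rho p + ε₁ - p x x →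
      beta ≤ max (α * (beta + ε)) (lam + 2 * ε) := by
    intro ε hε hεδ
    have hev : ∀ᶠ c in atTop, s c < beta + ε :=
      eventually_lt_of_limsup_lt (by linarith) hBddAbove
    obtain ⟨N₁, hN₁⟩ := eventually_atTop.mp hev
    set C := 2 / (1 - α) * p (T^[N₁] x) (T (T^[N₁] x)) with hCd
    have hC0 : 0 ≤ C := mul_nonneg (by positivity) (hp.nonneg _ _)
    have hC : ∀ b, N₁ < b → p (T^[N₁] x) (T^[b] x) ≤ C := by
      intro b hb
      have h := horb (T^[N₁] x) (b - N₁) (by omega)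
      rw [← Function.iterate_add_apply] at h
      rw [show b - N₁ + N₁ = b from by omega] at h
      exact h
    have hdecay := decay_bd p hp T α hα0 hα1 hA x N₁ C (beta + ε) (by linarith)
      (fun c hc => (hN₁ c hc).le) hC
    obtain ⟨k₀, hk₀⟩ := exists_pow_lt_of_lt_one
      (show (0 : ℝ) < (beta + ε) / (C + 1) from by positivity) hα1
    set A := N₁ + k₀ with hAd
    have horbA : ∀ a, A ≤ a → ∀ b, a < b → p (T^[a] x) (T^[b] x) ≤ beta + ε := by
      intro a ha b hb
      have h := hdecay a (by omega) b hb
      have hpow : α ^ (a - N₁) ≤ α ^ k₀ := pow_le_pow_of_le_one hα0 hα1.le (by omega)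
      have hbound : α ^ (a - N₁) * C ≤ beta + ε := by
        calc α ^ (a - N₁) * C ≤ α ^ k₀ * C := mul_le_mul_of_nonneg_right hpow hC0
          _ ≤ (beta + ε) / (C + 1) * C := mul_le_mul_of_nonneg_right hk₀.le hC0
          _ ≤ beta + ε := by
              rw [div_mul_eq_mul_div, div_le_iff₀ (by linarith)]; nlinarith
      exact le_trans h (max_le hbound le_rfl)
    have hfr : ∃ᶠ q in atTop, s q < lam + ε :=
      frequently_lt_of_liminf_lt hcob_ge (by linarith)
    obtain ⟨a, haA, hsa⟩ := frequently_atTop.mp hfr A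
    obtain ⟨b, hba, hsb⟩ := frequently_atTop.mp hfr (a + 1)
    have hmax : max (p (T^[a] x) (T^[a] x)) (p (T^[b] x) (T^[b] x)) ≤ rho p + ε₁ := by
      apply max_le
      · have : s a < lam + ε := hsa
        rw [hs] at this; simp only at this; linarith
      · have : s b < lam + ε := hsb
        rw [hs] at this; simp only at this; linarith
    obtain ⟨m, hm1, hm⟩ := hB (T^[a] x) (T^[b] x) hmax ε hε
    rw [← Function.iterate_add_apply T m a x, ← Function.iterate_add_apply T m b x] at hm
    have hmaxab : max (p (T^[a] x) (T^[a] x)) (p (T^[b] x) (T^[b] x)) ≤ lam + ε := by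
      apply max_le
      · have : s a < lam + ε := hsa
        rw [hs] at this; simp only at this; linarith
      · have : s b < lam + ε := hsb
        rw [hs] at this; simp only at this; linarith
    have huv : p (T^[m + a] x) (T^[m + b] x) ≤ lam + 2 * ε := by linarith
    have hsu : p (T^[m + a] x) (T^[m + a] x) ≤ lam + 2 * ε :=
      le_trans (hp.self_le _ _) huv
    have huA : A ≤ m + a := by omega
    have hev2 : ∀ n, (m + a) + 2 ≤ n → s n ≤ max (α * (beta + ε)) (lam + 2 * ε) := by
      intro n hn
      obtain ⟨w, rfl⟩ : ∃ w, n = w + 1 + 1 + (m + a) := ⟨n - (m + a) - 2, by omega⟩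
      have hAz := hA (T^[m + a] x) (w + 1) (by omega)
      simp only [← Function.iterate_succ_apply', ← Function.iterate_add_apply] at hAz
      have hsn : s (w + 1 + 1 + (m + a)) ≤ p (T^[m + a + 1] x) (T^[w + 1 + 1 + (m + a)] x) := by
        rw [hs]; simp only
        have h1 : p (T^[w + 1 + 1 + (m + a)] x) (T^[w + 1 + 1 + (m + a)] x) ≤
            p (T^[w + 1 + 1 + (m + a)] x) (T^[m + a + 1] x) := hp.self_le _ _
        exact h1.trans_eq (hp.symm _ _)
      refine le_trans hsn (le_trans hAz (max_le ?_ ?_))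
      · refine le_trans (Finset.sup'_le _ _ fun i hi => ?_) (le_max_left _ _)
        obtain ⟨hi1, _⟩ := Finset.mem_Icc.mp hi
        exact mul_le_mul_of_nonneg_left (horbA (m + a) huA (i + (m + a)) (by omega)) hα0
      · exact le_trans hsu (le_max_right _ _)
    exact limsup_le_of_le hcob_le (eventually_atTop.mpr ⟨(m + a) + 2, hev2⟩)
  -- conclude beta ≤ lam
  have hfinal : beta ≤ lam := by
    by_contra hcon
    push_neg at hcon
    have hβpos : 0 < beta := lt_of_le_of_lt hlam0 hcon
    set ε := min (min ((beta - lam) / 3) ((1 - α) * beta / 2)) (rho p + ε₁ - p x x) with hεd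
    have hε : 0 < ε := lt_min (lt_min (by linarith) (by positivity)) (by linarith)
    have h1 := hkey ε hε (min_le_right _ _)
    have e1 : ε ≤ (beta - lam) / 3 := le_trans (min_le_left _ _) (min_le_left _ _)
    have e2 : ε ≤ (1 - α) * beta / 2 := le_trans (min_le_left _ _) (min_le_right _ _)
    have hc1 : α * (beta + ε) < beta := by nlinarith
    have hc2 : lam + 2 * ε < beta := by linarith
    exact absurd (lt_of_le_of_lt h1 (max_lt hc1 hc2)) (lt_irrefl _)
  have heq : limsup s atTop = lam := le_antisymm hfinal hlb
  exact ⟨lam, tendsto_of_liminf_eq_limsup rfl heq hBddAbove hBddBelow, hlam_le⟩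
end

section
/- Let (U,p) be a ρ_p-complete partial metric space and T : U → U satisfy conditions (A) (for some α ∈ [0,1)) and (B) (for some ε₁ > 0). Then for every x ∈ U_p := {x : p(x,x) = ρ_p}, lim_{q→∞} p(x̄, T^q(x)) = lim_{q,q'→∞} p(T^q(x), T^{q'}(x)) = p(x̄, x̄), where x̄ is the unique fixed point of T in U_p. -/
open Filter Topology

set_option maxHeartbeats 1000000 in
theorem main_theorem_limits {U : Type*} (p : U → U → ℝ) (hp : IsPartialMetric p)
    (hcomp : RhoComplete p)
    (T : U → U) (α : ℝ) (hα0 : 0 ≤ α) (hα1 : α < 1) (hA : CondA p T α)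
    (ε₁ : ℝ) (hε₁ : 0 < ε₁) (hB : CondB p T ε₁)
    (xbar : U) (hxbar : p xbar xbar = rho p ∧ T xbar = xbar)
    (huniq : ∀ y : U, p y y = rho p ∧ T y = y → y = xbar) :
    ∀ x : U, p x x = rho p →
      Tendsto (fun q : ℕ => p xbar (T^[q] x)) atTop (nhds (p xbar xbar)) ∧
      Tendsto (fun qq : ℕ × ℕ => p (T^[qq.1] x) (T^[qq.2] x)) atTop
        (nhds (p xbar xbar)) := by
  obtain ⟨hxρ, hxfix⟩ := hxbar
  intro x hx
  set ρ := rho p with hρdef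
  have hbdd : BddBelow (Set.range fun y : U => p y y) :=
    ⟨0, by rintro r ⟨y, rfl⟩; exact hp.nonneg y y⟩
  have h0 : ∀ y : U, ρ ≤ p y y := fun y => csInf_le hbdd ⟨y, rfl⟩
  have hlow : ∀ y z : U, ρ ≤ p y z := fun y z => (h0 y).trans (hp.self_le y z)
  have hρ0 : 0 ≤ ρ := le_csInf ⟨p x x, x, rfl⟩ (by rintro r ⟨y, rfl⟩; exact hp.nonneg y y)
  set f : ℕ → U := fun n => T^[n] x with hfdef
  have hf0 : f 0 = x := rfl
  have hfadd : ∀ n k : ℕ, f (n + k) = T^[k] (f n) := by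
    intro n k
    simp only [hfdef]
    rw [add_comm]
    exact Function.iterate_add_apply T k n x
  have h1α : (0:ℝ) < 1 - α := by linarith
  -- reformulation of condition (A)
  have hA2 : ∀ n q B, 1 ≤ q → (∀ i, 1 ≤ i → i ≤ q + 1 → α * p (f n) (f (n + i)) ≤ B) →
      p (f n) (f n) ≤ B → p (f (n + 1)) (f (n + 1 + q)) ≤ B := by
    intro n q B hq hi hself
    have h := hA (f n) q hq
    have e1 : T (f n) = f (n + 1) := by rw [hfadd n 1, Function.iterate_one]
    have e2 : T^[q + 1] (f n) = f (n + 1 + q) := by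
      rw [show n + 1 + q = n + (q + 1) by omega, hfadd]
    rw [e1, e2] at h
    refine h.trans (max_le (Finset.sup'_le _ _ ?_) hself)
    intro i hi'
    rw [Finset.mem_Icc] at hi'
    rw [(hfadd n i).symm]
    exact hi i hi'.1 hi'.2
  set C : ℝ := (p x (f 1) + p x x) / (1 - α) with hCdef
  -- Step 1: orbit is bounded
  have hC : ∀ n, 1 ≤ n → p x (f n) ≤ C := by
    intro n
    induction n using Nat.strong_induction_on with
    | _ n IH =>
      intro hn
      have hCe : C * (1 - α) = p x (f 1) + p x x := div_mul_cancel₀ _ (ne_of_gt h1α)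
      rcases eq_or_lt_of_le hn with h1 | h2
      · rw [← h1, hCdef, le_div_iff₀ h1α]
        nlinarith [hp.nonneg x x, hp.nonneg x (f 1), mul_nonneg hα0 (hp.nonneg x (f 1))]
      · set B := max (max (α * C) (α * p x (f n))) (p x x) with hBdef
        have hcond : ∀ i, 1 ≤ i → i ≤ (n - 1) + 1 → α * p (f 0) (f (0 + i)) ≤ B := by
          intro i hi1 hi2
          rw [zero_add, hf0]
          rcases eq_or_lt_of_le (show i ≤ n by omega) with he | hlt
          · rw [he]; exact le_max_of_le_left (le_max_right _ _)
          · exact le_max_of_le_left (le_max_of_le_left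
              (mul_le_mul_of_nonneg_left (IH i hlt hi1) hα0))
        have hself : p (f 0) (f 0) ≤ B := by rw [hf0]; exact le_max_right _ _
        have hfb := hA2 0 (n - 1) B (by omega) hcond hself
        rw [show 0 + 1 = 1 by rfl, show 0 + 1 + (n - 1) = n by omega] at hfb
        have ht := hp.triangle x (f n) (f 1)
        have hn1 := hp.nonneg (f 1) (f 1)
        rw [hCdef, le_div_iff₀ h1α]
        rcases max_cases (max (α * C) (α * p x (f n))) (p x x) with ⟨hBe, _⟩ | ⟨hBe, _⟩
        · rcases max_cases (α * C) (α * p x (f n)) with ⟨hBe2, _⟩ | ⟨hBe2, _⟩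
          · rw [hBdef, hBe, hBe2] at hfb
            have hkey : (1 - α) * p x (f n) ≤ (1 - α) * (p x (f 1) + α * C) :=
              mul_le_mul_of_nonneg_left (by linarith) (le_of_lt h1α)
            nlinarith [hp.nonneg x x, hp.nonneg x (f 1), mul_nonneg hα0 (hp.nonneg x x),
              mul_nonneg hα0 (hp.nonneg x (f 1))]
          · rw [hBdef, hBe, hBe2] at hfb
            nlinarith [hp.nonneg x x, hp.nonneg x (f n)]
        · rw [hBdef, hBe] at hfb
          nlinarith [hp.nonneg x x, hp.nonneg x (f n), mul_nonneg hα0 (hp.nonneg x (f n))]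
  have hC0 : 0 ≤ C := (hp.nonneg x (f 1)).trans (hC 1 le_rfl)
  -- Step 2: contraction of tail bounds
  have hS : ∀ n B, 0 ≤ B → (∀ i, 1 ≤ i → p (f n) (f (n + i)) ≤ B) →
      ∀ i, 1 ≤ i → p (f (n + 1)) (f (n + 1 + i)) ≤ max (α * B) (p (f n) (f n)) := by
    intro n B _ hbd i hi
    refine hA2 n i _ hi ?_ (le_max_right _ _)
    intro j hj1 _
    exact le_max_of_le_left (mul_le_mul_of_nonneg_left (hbd j hj1) hα0)
  have hstep : ∀ n B, (∀ i, 1 ≤ i → p (f n) (f (n + i)) ≤ B) →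
      ∀ i, 1 ≤ i → p (f (n + 1)) (f (n + 1 + i)) ≤ B := by
    intro n B hbd i hi
    have hrB : p (f n) (f n) ≤ B := (hp.self_le _ _).trans (hbd 1 le_rfl)
    have hB0 : (0:ℝ) ≤ B := (hp.nonneg _ _).trans hrB
    refine (hS n B hB0 hbd i hi).trans (max_le ?_ hrB)
    nlinarith
  have hmono : ∀ n m B, n ≤ m → (∀ i, 1 ≤ i → p (f n) (f (n + i)) ≤ B) →
      ∀ i, 1 ≤ i → p (f m) (f (m + i)) ≤ B := by
    intro n m B hnm
    induction m, hnm using Nat.le_induction with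
    | base => exact fun h => h
    | succ m _ IH => exact fun h => hstep m B (IH h)
  have hAll : ∀ N B, (∀ i, 1 ≤ i → p (f N) (f (N + i)) ≤ B) →
      ∀ n m, N ≤ n → N ≤ m → p (f n) (f m) ≤ B := by
    intro N B hbd n m hn hm
    rcases lt_trichotomy n m with h | h | h
    · have := hmono N n B hn hbd (m - n) (by omega)
      rwa [show n + (m - n) = m by omega] at this
    · subst h
      exact (hp.self_le _ _).trans (hmono N n B hn hbd 1 le_rfl)
    · have := hmono N m B hm hbd (n - m) (by omega)
      rw [show m + (n - m) = n by omega] at this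
      rw [hp.symm (f n) (f m)]
      exact this
  have hbase : ∀ i, 1 ≤ i → p (f 1) (f (1 + i)) ≤ 2 * C := by
    intro i hi
    have h1 := hC 1 le_rfl
    have h2 := hC (1 + i) (by omega)
    have ht := hp.triangle (f 1) (f (1 + i)) x
    have hs := hp.symm (f 1) x
    linarith [hp.nonneg x x]
  -- Condition (B) applied to a point of the orbit with itself
  have hBself : ∀ n ε, 0 < ε → p (f n) (f n) ≤ ρ + ε₁ →
      ∃ q, 1 ≤ q ∧ p (f (n + q)) (f (n + q)) ≤ p (f n) (f n) + ε := by
    intro n ε hε hn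
    obtain ⟨q, hq1, hq⟩ := hB (f n) (f n) (by simpa using hn) ε hε
    refine ⟨q, hq1, ?_⟩
    rw [hfadd n q]
    simpa using hq
  -- Step 4: key inductive claim
  have hclaim : ∀ k : ℕ, ∀ ε : ℝ, 0 < ε → ((k : ℝ) + 1) * ε ≤ ε₁ →
      ∃ n, 1 ≤ n ∧ p (f n) (f n) ≤ ρ + ((k : ℝ) + 1) * ε ∧
        ∀ i, 1 ≤ i → p (f n) (f (n + i)) ≤ max (α ^ k * (2 * C)) (ρ + ((k : ℝ) + 1) * ε) := by
    intro k
    induction k with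
    | zero =>
      intro ε hε hε'
      obtain ⟨q, hq1, hq⟩ := hB x x (by rw [max_self, hx]; linarith) ε hε
      have hq' : p (f q) (f q) ≤ ρ + (((0:ℕ) : ℝ) + 1) * ε := by
        rw [max_self, hx] at hq
        have : T^[q] x = f q := rfl
        rw [this] at hq
        push_cast
        linarith
      refine ⟨q, hq1, hq', ?_⟩
      intro i hi
      refine le_max_of_le_left ?_
      rw [pow_zero, one_mul]
      exact hmono 1 q (2 * C) hq1 hbase i hi
    | succ k IH =>
      intro ε hε hε'
      have hε'' : ((k : ℝ) + 1) * ε ≤ ε₁ := by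
        push_cast at hε' ⊢
        linarith [hε.le]
      obtain ⟨n, hn1, hr, hSb⟩ := IH ε hε hε''
      have hrε₁ : p (f n) (f n) ≤ ρ + ε₁ := by linarith
      obtain ⟨q, hq1, hq⟩ := hBself n ε hε hrε₁
      set B : ℝ := max (α ^ k * (2 * C)) (ρ + ((k : ℝ) + 1) * ε) with hBdef
      have hB0 : (0:ℝ) ≤ B := le_max_of_le_right
        (add_nonneg hρ0 (mul_nonneg (by positivity) hε.le))
      set B' : ℝ := max (α ^ (k+1) * (2 * C)) (ρ + ((k : ℝ) + 2) * ε) with hB'def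
      have hαB : α * B ≤ B' := by
        rcases max_cases (α ^ k * (2 * C)) (ρ + ((k : ℝ) + 1) * ε) with ⟨hBe, _⟩ | ⟨hBe, _⟩
        · rw [hBdef, hBe]
          refine le_max_of_le_left (le_of_eq ?_)
          rw [pow_succ]; ring
        · rw [hBdef, hBe]
          refine le_max_of_le_right ?_
          have hnn : (0:ℝ) ≤ ρ + ((k : ℝ) + 1) * ε :=
            add_nonneg hρ0 (mul_nonneg (by positivity) hε.le)
          have hprod := mul_nonneg (by linarith : (0:ℝ) ≤ 1 - α) hnn
          nlinarith
      have hrB' : p (f n) (f n) ≤ B' := by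
        refine le_max_of_le_right ?_
        linarith
      have hbd' : ∀ i, 1 ≤ i → p (f (n + 1)) (f (n + 1 + i)) ≤ B' := by
        intro i hi
        exact (hS n B hB0 hSb i hi).trans (max_le hαB hrB')
      refine ⟨n + q, by omega, ?_, ?_⟩
      · have : p (f (n + q)) (f (n + q)) ≤ ρ + ((k : ℝ) + 1) * ε + ε := by linarith
        push_cast
        push_cast at this
        linarith
      · intro i hi
        have := hmono (n + 1) (n + q) B' (by omega) hbd' i hi
        rw [hB'def] at this
        refine this.trans ?_
        have : ρ + ((k : ℝ) + 2) * ε ≤ ρ + ((((k:ℕ)+1 : ℕ) : ℝ) + 1) * ε := by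
          push_cast; linarith
        exact max_le_max le_rfl this
  -- Step 5: double Cauchy-type bound
  have hKey : ∀ δ : ℝ, 0 < δ → ∃ N, 1 ≤ N ∧
      ∀ n m, N ≤ n → N ≤ m → p (f n) (f m) ≤ ρ + δ := by
    intro δ hδ
    obtain ⟨K, hK⟩ := exists_pow_lt_of_lt_one
      (show (0:ℝ) < δ / (2 * (2 * C + 1)) by positivity) hα1
    have hKb : α ^ K * (2 * C) ≤ δ / 2 := by
      rw [lt_div_iff₀ (by positivity)] at hK
      nlinarith [pow_nonneg hα0 K]
    set ε : ℝ := min ε₁ (δ / 2) / ((K : ℝ) + 1) with hεdef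
    have hminpos : 0 < min ε₁ (δ / 2) := lt_min hε₁ (by linarith)
    have hεpos : 0 < ε := by
      rw [hεdef]
      positivity
    have hεeq : ((K : ℝ) + 1) * ε = min ε₁ (δ / 2) := by
      rw [hεdef]
      field_simp
    obtain ⟨N, hN1, _, hNS⟩ := hclaim K ε hεpos (by rw [hεeq]; exact min_le_left _ _)
    refine ⟨N, hN1, ?_⟩
    have hb : ∀ i, 1 ≤ i → p (f N) (f (N + i)) ≤ ρ + δ := by
      intro i hi
      refine (hNS i hi).trans (max_le ?_ ?_)
      · linarith
      · have h1 : ((K : ℝ) + 1) * ε ≤ δ / 2 := by rw [hεeq]; exact min_le_right _ _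
        linarith
    exact hAll N (ρ + δ) hb
  -- Step 6: convergence towards the fixed point
  have hXbar : ∀ δ : ℝ, 0 < δ → ∃ M, ∀ m, M ≤ m → p xbar (f m) ≤ ρ + δ := by
    intro δ hδ
    set ε : ℝ := min ε₁ δ / 3 with hεdef
    have hεpos : 0 < ε := by
      rw [hεdef]
      have := lt_min hε₁ hδ
      positivity
    have hεa : ε ≤ ε₁ / 3 := by
      rw [hεdef]
      have := min_le_left ε₁ δ
      linarith
    have hεb : ε ≤ δ / 3 := by
      rw [hεdef]
      have := min_le_right ε₁ δ
      linarith
    obtain ⟨N, hN1, hNp⟩ := hKey ε hεpos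
    have hrN : p (f N) (f N) ≤ ρ + ε := hNp N N le_rfl le_rfl
    obtain ⟨q, hq1, hq⟩ := hB (f N) xbar
      (max_le (by linarith) (by rw [hxρ]; linarith)) ε hεpos
    rw [Function.iterate_fixed hxfix q, ← hfadd N q] at hq
    have hM : p (f (N + q)) xbar ≤ ρ + 2 * ε := by
      refine hq.trans ?_
      rw [hxρ]
      have : max (p (f N) (f N)) ρ ≤ ρ + ε := max_le hrN (by linarith)
      linarith
    refine ⟨N + q, fun m hm => ?_⟩
    have ht := hp.triangle xbar (f m) (f (N + q))
    have h2 := hNp (N + q) m (by omega) (by omega)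
    have h3 := hlow (f (N + q)) (f (N + q))
    have h4 := hp.symm xbar (f (N + q))
    linarith
  -- Step 7: conclusion
  rw [hxρ]
  constructor
  · rw [Metric.tendsto_atTop]
    intro ε hε
    obtain ⟨M, hM⟩ := hXbar (ε / 2) (by linarith)
    refine ⟨M, fun n hn => ?_⟩
    have h1 := hlow xbar (f n)
    have h2 := hM n hn
    simp only [hfdef] at h1 h2
    rw [Real.dist_eq, abs_lt]
    constructor <;> linarith
  · rw [Metric.tendsto_atTop]
    intro ε hε
    obtain ⟨N, _, hNp⟩ := hKey (ε / 2) (by linarith)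
    refine ⟨(N, N), fun nm hnm => ?_⟩
    obtain ⟨ha, hb⟩ := Prod.le_def.mp hnm
    have h1 := hlow (f nm.1) (f nm.2)
    have h2 := hNp nm.1 nm.2 ha hb
    simp only [hfdef] at h1 h2
    rw [Real.dist_eq, abs_lt]
    constructor <;> linarith
end

section
/- Let (U,p) be a partial metric space and T : U → U satisfy p(T(x), T(y)) ≤ max{α·p(x,y), p(x,x), p(y,y)} for all x, y ∈ U, for a fixed α ∈ (0,1). Then for all x, y ∈ U and q ∈ ℕ, p(T^q(x), T^q(y)) ≤ max{α^q·p(x,y), p(x,x), p(y,y)}; in particular T satisfies condition (B) with any ε₁ > 0. -/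
open Filter Topology

theorem remark1_condB {U : Type*} (p : U → U → ℝ) (hp : IsPartialMetric p)
    (T : U → U) (α : ℝ) (hα0 : 0 < α) (hα1 : α < 1)
    (h : ∀ x y : U, p (T x) (T y) ≤ max (α * p x y) (max (p x x) (p y y))) :
    (∀ x y : U, ∀ q : ℕ, 1 ≤ q →
        p (T^[q] x) (T^[q] y) ≤ max (α ^ q * p x y) (max (p x x) (p y y))) ∧
      ∀ ε₁ : ℝ, 0 < ε₁ → CondB p T ε₁ := by
  have hself : ∀ z : U, ∀ n : ℕ, p (T^[n] z) (T^[n] z) ≤ p z z := by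
    intro z n
    induction n with
    | zero => simp
    | succ n ih =>
      rw [Function.iterate_succ_apply']
      have := h (T^[n] z) (T^[n] z)
      have h2 : α * p (T^[n] z) (T^[n] z) ≤ p (T^[n] z) (T^[n] z) := by
        nlinarith [hp.nonneg (T^[n] z) (T^[n] z)]
      simp only [max_self] at this
      exact le_trans this (le_trans (max_le h2 le_rfl) ih)
  have key : ∀ x y : U, ∀ q : ℕ,
      p (T^[q] x) (T^[q] y) ≤ max (α ^ q * p x y) (max (p x x) (p y y)) := by
    intro x y q
    induction q with
    | zero =>
      simp only [Function.iterate_zero, id, pow_zero, one_mul]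
      exact le_max_left _ _
    | succ n ih =>
      calc p (T^[n+1] x) (T^[n+1] y)
          = p (T (T^[n] x)) (T (T^[n] y)) := by
            rw [Function.iterate_succ_apply', Function.iterate_succ_apply']
        _ ≤ max (α * p (T^[n] x) (T^[n] y))
              (max (p (T^[n] x) (T^[n] x)) (p (T^[n] y) (T^[n] y))) := h _ _
        _ ≤ max (α ^ (n+1) * p x y) (max (p x x) (p y y)) := by
            apply max_le
            · calc α * p (T^[n] x) (T^[n] y)
                  ≤ α * max (α ^ n * p x y) (max (p x x) (p y y)) :=
                    mul_le_mul_of_nonneg_left ih hα0.le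
                _ ≤ max (α ^ (n+1) * p x y) (max (p x x) (p y y)) := by
                    rw [mul_max_of_nonneg _ _ hα0.le]
                    apply max_le_max
                    · rw [pow_succ, mul_comm (α^n) α, mul_assoc]
                    · nlinarith [le_max_left (p x x) (p y y), hp.nonneg x x,
                        le_max_right (p x x) (p y y)]
            · exact le_max_of_le_right (max_le_max (hself x n) (hself y n))
  refine ⟨fun x y q _ => key x y q, ?_⟩
  intro ε₁ _ x y _ ε hε
  obtain ⟨q, hq⟩ := exists_pow_lt_of_lt_one (x := ε / (p x y + 1)) (by have := hp.nonneg x y; positivity) hα1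
  refine ⟨q + 1, by omega, ?_⟩
  have hkey := key x y (q + 1)
  have hpow : α ^ (q + 1) * p x y ≤ ε := by
    have h1 : α ^ (q+1) ≤ α ^ q := pow_le_pow_of_le_one hα0.le hα1.le (by omega)
    have h2 : α ^ (q+1) * p x y ≤ (ε / (p x y + 1)) * p x y := by
      apply mul_le_mul (le_trans h1 hq.le) le_rfl (hp.nonneg x y) (by have := hp.nonneg x y; positivity)
    have h3 : (ε / (p x y + 1)) * p x y ≤ ε := by
      rw [div_mul_eq_mul_div, div_le_iff₀ (by nlinarith [hp.nonneg x y])]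
      nlinarith [hp.nonneg x y]
    linarith
  have h0 : 0 ≤ max (p x x) (p y y) := le_max_of_le_left (hp.nonneg x x)
  exact le_trans hkey (max_le (by linarith) (by linarith))
end

section
/- Let (U,p) be a partial metric space and T : U → U satisfy, for some α ∈ [0,1), p(T(x),T(y)) ≤ max{α p(x,y), α p(x,T(x)), α p(y,T(y)), (α/2)(p(x,T(y)) + p(y,T(x))), p(x,x), p(y,y)} for all x, y ∈ U. Then for every x ∈ U and q ∈ ℕ, p(T^q(x), T^{q+1}(x)) ≤ p(T^{q−1}(x), T^q(x)); in particular p(T^q(x), T^{q+1}(x)) ≤ p(x, T(x)) for all q. -/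
open Filter Topology

theorem remark2_monotone {U : Type*} (p : U → U → ℝ) (hp : IsPartialMetric p)
    (T : U → U) (α : ℝ) (hα0 : 0 ≤ α) (hα1 : α < 1)
    (h : ∀ x y : U, p (T x) (T y) ≤
        max (α * p x y) (max (α * p x (T x)) (max (α * p y (T y))
          (max (α / 2 * (p x (T y) + p y (T x))) (max (p x x) (p y y)))))) :
    ∀ x : U, ∀ q : ℕ, 1 ≤ q →
      p (T^[q] x) (T^[q + 1] x) ≤ p (T^[q - 1] x) (T^[q] x) ∧
      p (T^[q] x) (T^[q + 1] x) ≤ p x (T x) := by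
  have key : ∀ u : U, p (T u) (T (T u)) ≤ p u (T u) := by
    intro u
    have h1 := h u (T u)
    have ha : 0 ≤ p u (T u) := hp.nonneg _ _
    have hb : 0 ≤ p (T u) (T (T u)) := hp.nonneg _ _
    have htri := hp.triangle u (T (T u)) (T u)
    have hs1 := hp.self_le u (T u)
    have hs2 := hp.self_le (T u) (T (T u))
    have hs3 : p (T u) (T u) ≤ p u (T u) := by
      have := hp.self_le (T u) u
      rwa [hp.symm (T u) u] at this
    rcases le_max_iff.mp h1 with h2 | h2
    · nlinarith
    rcases le_max_iff.mp h2 with h2 | h2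
    · nlinarith
    rcases le_max_iff.mp h2 with h2 | h2
    · nlinarith
    rcases le_max_iff.mp h2 with h2 | h2
    · nlinarith
    rcases le_max_iff.mp h2 with h2 | h2
    · linarith
    · linarith
  intro x q hq
  obtain ⟨m, rfl⟩ : ∃ m, q = m + 1 := ⟨q - 1, by omega⟩
  constructor
  · have := key (T^[m] x)
    simpa [Function.iterate_succ_apply', Nat.add_sub_cancel] using this
  · induction m with
    | zero => simpa [Function.iterate_succ_apply'] using key x
    | succ n ih =>
      have h1 := key (T^[n + 1] x)
      have h2 := ih (by omega)
      calc p (T^[n + 1 + 1] x) (T^[n + 1 + 1 + 1] x)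
          ≤ p (T^[n + 1] x) (T^[n + 1 + 1] x) := by
            simpa [Function.iterate_succ_apply'] using h1
        _ ≤ p x (T x) := h2
end

section
/- Let (U,p) be a partial metric space and T : U → U satisfy, for some α ∈ [0,1), p(T(x),T(y)) ≤ max{α p(x,y), α p(x,T(x)), α p(y,T(y)), (α/2)(p(x,T(y)) + p(y,T(x))), p(x,x), p(y,y)} for all x, y ∈ U. Then T satisfies condition (A): for all x ∈ U and q ∈ ℕ, p(T(x), T^{q+1}(x)) ≤ max{α·p(x,T^{q+1}(x)), …, α·p(x,T(x)), p(x,x)}. -/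
open Filter Topology

theorem remark2_condA {U : Type*} (p : U → U → ℝ) (hp : IsPartialMetric p)
    (T : U → U) (α : ℝ) (hα0 : 0 ≤ α) (hα1 : α < 1)
    (h : ∀ x y : U, p (T x) (T y) ≤
        max (α * p x y) (max (α * p x (T x)) (max (α * p y (T y))
          (max (α / 2 * (p x (T y) + p y (T x))) (max (p x x) (p y y)))))) :
    CondA p T α := by
  intro x q hq
  set n := q + 1 with hn
  have hne : ((Finset.range (n+1)) ×ˢ (Finset.range (n+1))).Nonempty :=
    ⟨(0,0), by simp⟩
  set D := ((Finset.range (n+1)) ×ˢ (Finset.range (n+1))).sup' hne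
      (fun ij => p (T^[ij.1] x) (T^[ij.2] x)) with hDdef
  have hleD : ∀ i j, i ≤ n → j ≤ n → p (T^[i] x) (T^[j] x) ≤ D := by
    intro i j hi hj
    exact Finset.le_sup' (f := fun ij : ℕ × ℕ => p (T^[ij.1] x) (T^[ij.2] x))
      (b := (i, j)) (by simp [Finset.mem_product]; omega)
  have hD0 : 0 ≤ D := le_trans (hp.nonneg x x) (by simpa using hleD 0 0 (by omega) (by omega))
  have claim2 : ∀ s i j, 1 ≤ i → 1 ≤ j → i ≤ n → j ≤ n → i + j ≤ s →
      p (T^[i] x) (T^[j] x) ≤ max (α * D) (p x x) := by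
    intro s
    induction s with
    | zero => intro i j hi hj _ _ hs; omega
    | succ s ih =>
      intro i j hi hj hin hjn hs
      obtain ⟨i', rfl⟩ : ∃ i', i = i' + 1 := ⟨i - 1, by omega⟩
      obtain ⟨j', rfl⟩ : ∃ j', j = j' + 1 := ⟨j - 1, by omega⟩
      have e1 : T^[i'+1] x = T (T^[i'] x) := Function.iterate_succ_apply' T i' x
      have e2 : T^[j'+1] x = T (T^[j'] x) := Function.iterate_succ_apply' T j' x
      rw [e1, e2]
      refine le_trans (h (T^[i'] x) (T^[j'] x)) ?_
      have hαD : α * D ≤ max (α * D) (p x x) := le_max_left _ _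
      refine max_le ?_ (max_le ?_ (max_le ?_ (max_le ?_ (max_le ?_ ?_))))
      · exact le_trans (mul_le_mul_of_nonneg_left
          (hleD i' j' (by omega) (by omega)) hα0) hαD
      · rw [← e1]
        exact le_trans (mul_le_mul_of_nonneg_left
          (hleD i' (i'+1) (by omega) (by omega)) hα0) hαD
      · rw [← e2]
        exact le_trans (mul_le_mul_of_nonneg_left
          (hleD j' (j'+1) (by omega) (by omega)) hα0) hαD
      · rw [← e1, ← e2]
        have h1 := hleD i' (j'+1) (by omega) (by omega)
        have h2 := hleD j' (i'+1) (by omega) (by omega)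
        refine le_trans ?_ hαD
        nlinarith
      · rcases Nat.eq_zero_or_pos i' with h0 | h0
        · subst h0; simp only [Function.iterate_zero, id_eq]
          exact le_max_right _ _
        · refine le_trans (hp.self_le (T^[i'] x) (T^[j'+1] x)) ?_
          exact ih i' (j'+1) (by omega) (by omega) (by omega) (by omega) (by omega)
      · rcases Nat.eq_zero_or_pos j' with h0 | h0
        · subst h0; simp only [Function.iterate_zero, id_eq]
          exact le_max_right _ _
        · refine le_trans (hp.self_le (T^[j'] x) (T^[i'+1] x)) ?_
          exact ih j' (i'+1) (by omega) (by omega) (by omega) (by omega) (by omega)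
  have hneΔ : (Finset.Icc 1 n).Nonempty := Finset.nonempty_Icc.mpr (by omega)
  set Δ := (Finset.Icc 1 n).sup' hneΔ (fun k => p x (T^[k] x)) with hΔdef
  have hpxΔ : ∀ k, 1 ≤ k → k ≤ n → p x (T^[k] x) ≤ Δ := by
    intro k h1 h2
    exact Finset.le_sup' (f := fun k => p x (T^[k] x)) (Finset.mem_Icc.mpr ⟨h1, h2⟩)
  have hxx : p x x ≤ Δ := le_trans (hp.self_le x (T^[1] x)) (hpxΔ 1 le_rfl (by omega))
  have hΔ0 : 0 ≤ Δ := le_trans (hp.nonneg x x) hxx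
  have hDmax : D ≤ max Δ (α * D) := by
    rw [hDdef]
    refine Finset.sup'_le _ _ ?_
    rintro ⟨i, j⟩ hmem
    simp only [Finset.mem_product, Finset.mem_range] at hmem
    rcases Nat.eq_zero_or_pos i with hi0 | hi0
    · subst hi0
      rcases Nat.eq_zero_or_pos j with hj0 | hj0
      · subst hj0
        simpa using le_trans hxx (le_max_left _ _)
      · simpa using le_trans (hpxΔ j hj0 (by omega)) (le_max_left _ _)
    · rcases Nat.eq_zero_or_pos j with hj0 | hj0
      · subst hj0
        simp only [Function.iterate_zero, id_eq]
        rw [hp.symm]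
        exact le_trans (hpxΔ i hi0 (by omega)) (le_max_left _ _)
      · have := claim2 (i + j) i j hi0 hj0 (by omega) (by omega) le_rfl
        refine le_trans this (max_le (le_max_right _ _) (le_trans hxx (le_max_left _ _)))
  have hDΔ : D ≤ Δ := by
    by_contra hcon
    push_neg at hcon
    have hDa : D ≤ α * D := by
      rcases max_cases Δ (α * D) with ⟨he, _⟩ | ⟨he, _⟩
      · rw [he] at hDmax; linarith
      · rw [he] at hDmax; exact hDmax
    nlinarith
  have final : p (T^[1] x) (T^[n] x) ≤ max (α * D) (p x x) :=
    claim2 (1 + n) 1 n le_rfl (by omega) (by omega) le_rfl (by omega)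
  simp only [Function.iterate_one] at final
  refine le_trans final (max_le ?_ (le_max_right _ _))
  have hαΔ : α * D ≤ α * Δ := mul_le_mul_of_nonneg_left hDΔ hα0
  refine le_trans hαΔ (le_trans ?_ (le_max_left _ _))
  obtain ⟨k, hk, hkeq⟩ := Finset.exists_mem_eq_sup' hneΔ (fun k => p x (T^[k] x))
  rw [hΔdef, hkeq]
  exact Finset.le_sup' (f := fun i => α * p x (T^[i] x)) hk
end

section
/- Let p be the partial metric on ℝ given by p(x,y) = |x−y| if x,y ≤ 0 and |x−y| + 1 otherwise, and let T : ℝ → ℝ be defined by T(x) = x/2 for x ≤ 0 and T(x) = 1 for x > 0. Then T satisfies condition (A) with α = 3/4: for all x ∈ ℝ and q ∈ ℕ, p(T(x), T^{q+1}(x)) ≤ max{(3/4)·p(x,T^{q+1}(x)), …, (3/4)·p(x,T(x)), p(x,x)}. -/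
open Filter Topology

noncomputable def pEx (x y : ℝ) : ℝ := if x ≤ 0 ∧ y ≤ 0 then |x - y| else |x - y| + 1

noncomputable def TEx (x : ℝ) : ℝ := if x ≤ 0 then x / 2 else 1


lemma TEx_iter (n : ℕ) {x : ℝ} (hx : x ≤ 0) : TEx^[n] x = x / 2 ^ n := by
  induction n with
  | zero => simp
  | succ n ih =>
    rw [Function.iterate_succ_apply', ih, TEx]
    rw [if_pos (div_nonpos_of_nonpos_of_nonneg hx (by positivity : (0:ℝ) ≤ 2 ^ n))]
    ring

lemma TEx_one : TEx 1 = 1 := by norm_num [TEx]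

lemma TEx_iter_pos (n : ℕ) {x : ℝ} (hx : 0 < x) : TEx^[n + 1] x = 1 := by
  induction n with
  | zero => simp [TEx, not_le.mpr hx]
  | succ n ih => rw [Function.iterate_succ_apply', ih, TEx_one]

theorem example1_condA : CondA pEx TEx (3 / 4) := by
  intro x q hq
  by_cases hx : x ≤ 0
  · -- x ≤ 0 case
    have h1 : TEx x = x / 2 := by simp [TEx, hx]
    have h2 : TEx^[q + 1] x = x / 2 ^ (q + 1) := TEx_iter _ hx
    have ht : (0:ℝ) < 2 ^ (q + 1) := by positivity
    have hx2 : x / 2 ≤ 0 := by linarith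
    have hx3 : x / 2 ^ (q + 1) ≤ 0 := div_nonpos_of_nonpos_of_nonneg hx (le_of_lt ht)
    have key : pEx (TEx x) (TEx^[q + 1] x) ≤ 3 / 4 * pEx x (TEx^[q + 1] x) := by
      rw [h1, h2, pEx, pEx, if_pos ⟨hx2, hx3⟩, if_pos ⟨hx, hx3⟩]
      have ht4 : (4:ℝ) ≤ 2 ^ (q + 1) := by
        calc (4:ℝ) = 2 ^ 2 := by norm_num
        _ ≤ 2 ^ (q + 1) := by apply pow_le_pow_right₀ (by norm_num); omega
      have hxt : x ≤ x / 2 ^ (q + 1) := by rw [le_div_iff₀ ht]; nlinarith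
      have hxt2 : x / 2 ≤ x / 2 ^ (q + 1) := by
        rw [div_le_div_iff₀ two_pos ht]; nlinarith
      rw [abs_of_nonpos (by linarith), abs_of_nonpos (by linarith)]
      linarith
    refine key.trans (le_max_of_le_left ?_)
    exact Finset.le_sup' (fun i => 3 / 4 * pEx x (TEx^[i] x))
      (Finset.mem_Icc.mpr ⟨by omega, le_refl _⟩)
  · -- x > 0 case
    push_neg at hx
    have h1 : TEx x = 1 := by simp [TEx, not_le.mpr hx]
    have h2 : TEx^[q + 1] x = 1 := TEx_iter_pos q hx
    have lhs : pEx (TEx x) (TEx^[q + 1] x) = 1 := by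
      rw [h1, h2, pEx]; norm_num
    have rhs : pEx x x = 1 := by
      rw [pEx]; simp [not_le.mpr hx]
    rw [lhs]
    exact le_max_of_le_right (by rw [rhs])
end

section
/- Let U = {0,1} with partial metric p(0,0) = 0 and p(x,y) = 1 + |x−y| otherwise, and let T : U → U swap 0 and 1. Then T satisfies condition (B) with ε₁ = 1/2, but T has no fixed point and T does not satisfy condition (A) for any α ∈ [0,1). -/
open Filter Topology

noncomputable def pTwo (x y : Fin 2) : ℝ :=
  if x = 0 ∧ y = 0 then 0 else 1 + |(x : ℝ) - (y : ℝ)|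

def TTwo (x : Fin 2) : Fin 2 := if x = 0 then 1 else 0

lemma rho_pTwo : rho pTwo = 0 := by
  have h : Set.range (fun x : Fin 2 => pTwo x x) = {0, 1} := by
    ext r
    constructor
    · rintro ⟨x, rfl⟩
      fin_cases x <;> norm_num [pTwo]
    · rintro (rfl | rfl)
      exacts [⟨0, by norm_num [pTwo]⟩, ⟨1, by norm_num [pTwo]⟩]
  rw [rho, h, csInf_pair]
  norm_num

theorem example3 :
    CondB pTwo TTwo (1 / 2) ∧ (∀ x : Fin 2, TTwo x ≠ x) ∧
      ∀ α : ℝ, 0 ≤ α → α < 1 → ¬ CondA pTwo TTwo α := by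
  refine ⟨?_, ?_, ?_⟩
  · intro x y h ε hε
    rw [rho_pTwo] at h
    have hx : x = 0 := by
      by_contra hx
      have h1 : (1:ℝ) ≤ pTwo x x := by simp [pTwo, hx]
      linarith [le_max_left (pTwo x x) (pTwo y y)]
    have hy : y = 0 := by
      by_contra hy
      have h1 : (1:ℝ) ≤ pTwo y y := by simp [pTwo, hy]
      linarith [le_max_right (pTwo x x) (pTwo y y)]
    subst hx hy
    refine ⟨2, one_le_two, ?_⟩
    have h2 : TTwo^[2] 0 = 0 := by decide
    rw [h2]
    have : pTwo 0 0 = 0 := by simp [pTwo]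
    rw [this]
    simp
    linarith
  · intro x
    fin_cases x <;> decide
  · intro α hα hα1 hA
    have h := hA 1 1 le_rfl
    have hT1 : TTwo 1 = 0 := by decide
    have hT2 : TTwo^[2] 1 = 1 := by decide
    have hlhs : pTwo (TTwo 1) (TTwo^[2] 1) = 2 := by
      rw [hT1, hT2]; norm_num [pTwo]
    have hsup : ((Finset.Icc 1 2).sup' (Finset.nonempty_Icc.mpr (by omega))
        (fun i => α * pTwo 1 (TTwo^[i] 1))) ≤ 2 * α := by
      apply Finset.sup'_le
      intro i hi
      rw [Finset.mem_Icc] at hi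
      obtain ⟨hi1, hi2⟩ := hi
      interval_cases i
      · have : TTwo^[1] 1 = 0 := by decide
        rw [this]
        have : pTwo 1 0 = 2 := by norm_num [pTwo]
        rw [this]; linarith
      · rw [hT2]
        have : pTwo 1 1 = 1 := by norm_num [pTwo]
        rw [this]; linarith
    rw [hlhs] at h
    have hp11 : pTwo 1 1 = 1 := by norm_num [pTwo]
    rw [hp11] at h
    have : (2:ℝ) ≤ max (2*α) 1 := le_trans h (max_le_max hsup le_rfl)
    rcases le_max_iff.mp this with h' | h' <;> linarith
end

section
/- Let U = ℕ₀ ∪ {n + 1/(2k) : n ∈ ℕ₀, k ∈ ℕ} with metric p(x,y) = |x−y|, and define T : U → U by T(n) = n + 1 + 1/2 for n ∈ ℕ₀ and T(n + 1/(2k)) = n + 1/(4k). Then T satisfies condition (A) with α = 3/4, but T(x) ≠ x for all x ∈ U. -/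
open Filter Topology

theorem example5
    (T : {x : ℝ // (∃ n : ℕ, x = (n : ℝ)) ∨
          ∃ n k : ℕ, 1 ≤ k ∧ x = (n : ℝ) + 1 / (2 * (k : ℝ))} →
        {x : ℝ // (∃ n : ℕ, x = (n : ℝ)) ∨
          ∃ n k : ℕ, 1 ≤ k ∧ x = (n : ℝ) + 1 / (2 * (k : ℝ))})
    (hT1 : ∀ x, (∃ n : ℕ, x.1 = (n : ℝ)) → (T x).1 = x.1 + 1 + 1 / 2)
    (hT2 : ∀ x, ∀ n k : ℕ, 1 ≤ k → x.1 = (n : ℝ) + 1 / (2 * (k : ℝ)) →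
      (T x).1 = (n : ℝ) + 1 / (4 * (k : ℝ))) :
    CondA (fun a b => |a.1 - b.1|) T (3 / 4) ∧ ∀ x, T x ≠ x := by
  have iterVal : ∀ y (n k : ℕ), 1 ≤ k → y.1 = (n : ℝ) + 1 / (2 * (k : ℝ)) →
      ∀ i : ℕ, (T^[i] y).1 = (n : ℝ) + 1 / (2 * ((2 ^ i * k : ℕ) : ℝ)) := by
    intro y n k hk hy i
    induction i with
    | zero => simpa using hy
    | succ i ih =>
      rw [Function.iterate_succ_apply']
      have h2 : (1 : ℕ) ≤ 2 ^ i * k := Nat.one_le_iff_ne_zero.mpr (by positivity)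
      have h3 := hT2 (T^[i] y) n (2 ^ i * k) h2 ih
      rw [h3]; push_cast; ring
  constructor
  · intro x q hq
    have hkey : |(T x).1 - (T^[q+1] x).1| ≤ 3 / 4 * |x.1 - (T^[q+1] x).1| := by
      have ht1 : (1 : ℝ) ≤ 2 ^ q := one_le_pow₀ (by norm_num)
      have ht2 : (2 : ℝ) ≤ 2 ^ q := by
        calc (2:ℝ) = 2^1 := by norm_num
        _ ≤ 2 ^ q := pow_le_pow_right₀ (by norm_num) hq
      rcases x.2 with ⟨n, hn⟩ | ⟨n, k, hk, hn⟩
      · have h1 : (T x).1 = (n : ℝ) + 1 + 1 / 2 := by rw [hT1 x ⟨n, hn⟩, hn]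
        have h2 : (T^[q+1] x).1 = (n : ℝ) + 1 + 1 / (2 * (2 ^ q : ℝ)) := by
          rw [Function.iterate_succ_apply]
          have := iterVal (T x) (n + 1) 1 le_rfl (by rw [h1]; push_cast; ring) q
          rw [this]; push_cast; ring
        rw [hn, h1, h2]
        have hc : (0 : ℝ) < 1 / (2 * (2 ^ q : ℝ)) := by positivity
        have hc2 : 1 / (2 * (2 : ℝ) ^ q) ≤ 1 / 2 := by
          apply div_le_div_of_nonneg_left (by norm_num) (by norm_num)
          linarith
        rw [show ((n:ℝ) + 1 + 1/2) - ((n:ℝ) + 1 + 1/(2*(2^q:ℝ))) = 1/2 - 1/(2*(2^q:ℝ)) from by ring,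
            show (n:ℝ) - ((n:ℝ) + 1 + 1/(2*(2^q:ℝ))) = -(1 + 1/(2*(2^q:ℝ))) from by ring,
            abs_neg, abs_of_nonneg (by linarith), abs_of_nonneg (by linarith)]
        linarith
      · have hkr : (0 : ℝ) < (k : ℝ) := by exact_mod_cast hk
        set s : ℝ := 1 / (2 * (k : ℝ)) with hs
        have hspos : 0 < s := by positivity
        have h1 : (T x).1 = (n : ℝ) + s / 2 := by
          have := iterVal x n k hk hn 1
          rw [Function.iterate_one] at this
          rw [this]; push_cast; rw [hs]; field_simp
        have h2 : (T^[q+1] x).1 = (n : ℝ) + s / (2 * 2 ^ q) := by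
          have := iterVal x n k hk hn (q+1)
          rw [this]; push_cast; rw [hs]; field_simp; ring
        have hb : 0 < s / (2 * 2 ^ q) := by positivity
        have hb2 : s / (2 * 2 ^ q) ≤ s / 4 := by
          apply div_le_div_of_nonneg_left (le_of_lt hspos) (by norm_num)
          linarith
        rw [hn, h1, h2]
        have hnx : (n : ℝ) + 1 / (2 * (k:ℝ)) = (n : ℝ) + s := by rw [hs]
        rw [hnx,
            show ((n:ℝ) + s/2) - ((n:ℝ) + s/(2*2^q)) = s/2 - s/(2*2^q) from by ring,
            show ((n:ℝ) + s) - ((n:ℝ) + s/(2*2^q)) = s - s/(2*2^q) from by ring,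
            abs_of_nonneg (by linarith), abs_of_nonneg (by linarith)]
        linarith
    have hmem : q + 1 ∈ Finset.Icc 1 (q + 1) := Finset.mem_Icc.mpr ⟨by omega, le_refl _⟩
    refine le_trans hkey (le_trans ?_ (le_max_left _ _))
    exact Finset.le_sup' (fun i => 3 / 4 * |x.1 - (T^[i] x).1|) hmem
  · intro x hx
    have hv : (T x).1 = x.1 := by rw [hx]
    rcases x.2 with ⟨n, hn⟩ | ⟨n, k, hk, hn⟩
    · rw [hT1 x ⟨n, hn⟩] at hv; linarith
    · have hkr : (0 : ℝ) < (k : ℝ) := by exact_mod_cast hk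
      rw [hT2 x n k hk hn, hn] at hv
      have : 1 / (4 * (k:ℝ)) < 1 / (2 * (k:ℝ)) := by
        apply div_lt_div_of_pos_left (by norm_num) (by positivity)
        linarith
      linarith
end
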